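/- arXiv:2105.14169 — 6 statements merged into one kernel-verified Lean document; each statement's English description precedes it below -/
import Mathlib

section
/- For permutations σ, ρ in the symmetric group S_n, the element π_σ · π̄_ρ of the 0-Hecke algebra H_n(0) is nonzero if and only if ℓ(σρ) = ℓ(σ) + ℓ(ρ), where π_σ and π̄_ρ are the standard products of generators π_i and π̄_i = π_i − 1 along reduced words. -/
open scoped Classical

noncomputable section

/-- The symmetric group `S_{n+1}` (the paper's `S_n` with `n = n+1`). -/
abbrev SG (n : ℕ) := Equiv.Perm (Fin (n + 1))

/-- The simple transposition `s_{i+1}` (adjacent transposition swapping `i` and `i+1`,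
0-indexed). -/
def sgen {n : ℕ} (i : Fin n) : SG n := Equiv.swap i.castSucc i.succ

/-- Coxeter length of a permutation, i.e. its number of inversions. -/
def len {n : ℕ} (σ : SG n) : ℕ :=
  (Finset.univ.filter fun p : Fin (n + 1) × Fin (n + 1) => p.1 < p.2 ∧ σ p.2 < σ p.1).card

/-- The left weak Bruhat order on `S_{n+1}`. -/
def leL {n : ℕ} (σ ρ : SG n) : Prop := ∃ γ, ρ = γ * σ ∧ len ρ = len σ + len γ

/-- Left descent set. -/
def DesL {n : ℕ} (σ : SG n) : Set (Fin n) := {i | len (sgen i * σ) < len σ}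

/-- Right descent set. -/
def DesR {n : ℕ} (σ : SG n) : Set (Fin n) := {i | len (σ * sgen i) < len σ}

/-- The longest element `w₀` of `S_{n+1}`. -/
def w0 {n : ℕ} : SG n := ⟨Fin.rev, Fin.rev, Fin.rev_rev, Fin.rev_rev⟩

lemma len_one {n : ℕ} : len (1 : SG n) = 0 := by
  unfold len
  rw [Finset.card_eq_zero, Finset.eq_empty_iff_forall_notMem]
  rintro p hp
  rw [Finset.mem_filter] at hp
  obtain ⟨-, h1, h2⟩ := hp
  simp only [Equiv.Perm.one_apply] at h2
  exact absurd (h1.trans h2) (lt_irrefl _)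

lemma leL_refl {n : ℕ} (σ : SG n) : leL σ σ :=
  ⟨1, (one_mul σ).symm, by simp [len_one]⟩

/-- The defining relations of the 0-Hecke algebra `H_{n+1}(0)`. -/
inductive HRel (n : ℕ) : FreeAlgebra ℂ (Fin n) → FreeAlgebra ℂ (Fin n) → Prop
  | idem (i : Fin n) :
      HRel n (FreeAlgebra.ι ℂ i * FreeAlgebra.ι ℂ i) (FreeAlgebra.ι ℂ i)
  | braid (i j : Fin n) (h : (i : ℕ) + 1 = j) :
      HRel n (FreeAlgebra.ι ℂ i * FreeAlgebra.ι ℂ j * FreeAlgebra.ι ℂ i)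
             (FreeAlgebra.ι ℂ j * FreeAlgebra.ι ℂ i * FreeAlgebra.ι ℂ j)
  | comm (i j : Fin n) (h : (i : ℕ) + 2 ≤ j) :
      HRel n (FreeAlgebra.ι ℂ i * FreeAlgebra.ι ℂ j) (FreeAlgebra.ι ℂ j * FreeAlgebra.ι ℂ i)

/-- The 0-Hecke algebra `H_{n+1}(0)` over `ℂ`. -/
abbrev Hecke (n : ℕ) := RingQuot (HRel n)

/-- The generator `π_{i+1}` of the 0-Hecke algebra. -/
def hpi {n : ℕ} (i : Fin n) : Hecke n :=
  RingQuot.mkAlgHom ℂ (HRel n) (FreeAlgebra.ι ℂ i)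

/-- The element `π̄_{i+1} = π_{i+1} - 1`. -/
def hpibar {n : ℕ} (i : Fin n) : Hecke n := hpi i - 1

/-- `l` is a reduced word for `σ`. -/
def IsReducedWord {n : ℕ} (l : List (Fin n)) (σ : SG n) : Prop :=
  (l.map sgen).prod = σ ∧ l.length = len σ

/-- `π_σ`, the product of the generators `π_i` along a reduced word for `σ`. -/
noncomputable def piPerm {n : ℕ} (σ : SG n) : Hecke n :=
  if h : ∃ l : List (Fin n), IsReducedWord l σ then ((h.choose.map hpi).prod) else 0

/-- `π̄_σ`, the product of the elements `π̄_i` along a reduced word for `σ`. -/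
noncomputable def pibarPerm {n : ℕ} (σ : SG n) : Hecke n :=
  if h : ∃ l : List (Fin n), IsReducedWord l σ then ((h.choose.map hpibar).prod) else 0

/-- The left weak Bruhat interval `[σ,ρ]_L`. -/
abbrev Itv {n : ℕ} (σ ρ : SG n) := {γ : SG n // leL σ γ ∧ leL γ ρ}

/-- The action of the generator `π_{i+1}` on a basis element of `ℂ[σ,ρ]_L`. -/
noncomputable def bpiFun {n : ℕ} (σ ρ : SG n) (i : Fin n) (γ : Itv σ ρ) :
    Itv σ ρ →₀ ℂ :=
  if i ∈ DesL γ.1 then Finsupp.single γ 1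
  else if h : leL σ (sgen i * γ.1) ∧ leL (sgen i * γ.1) ρ then
    Finsupp.single ⟨sgen i * γ.1, h⟩ 1
  else 0

/-- The operator `𝛑_i` on `ℂ[σ,ρ]_L` (the action of `π_{i+1}` on `B(σ,ρ)`). -/
noncomputable def bpi {n : ℕ} (σ ρ : SG n) (i : Fin n) :
    (Itv σ ρ →₀ ℂ) →ₗ[ℂ] (Itv σ ρ →₀ ℂ) :=
  Finsupp.lift _ ℂ _ (bpiFun σ ρ i)

/-- The action of `π̄_{i+1}` on a basis element of the module `B̄(σ,ρ)`. -/
noncomputable def bbarFun {n : ℕ} (σ ρ : SG n) (i : Fin n) (γ : Itv σ ρ) :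
    Itv σ ρ →₀ ℂ :=
  if i ∈ DesL γ.1 then -Finsupp.single γ 1
  else if h : leL σ (sgen i * γ.1) ∧ leL (sgen i * γ.1) ρ then
    Finsupp.single ⟨sgen i * γ.1, h⟩ 1
  else 0

/-- The operator giving the action of `π̄_{i+1}` on `B̄(σ,ρ)`. -/
noncomputable def bbar {n : ℕ} (σ ρ : SG n) (i : Fin n) :
    (Itv σ ρ →₀ ℂ) →ₗ[ℂ] (Itv σ ρ →₀ ℂ) :=
  Finsupp.lift _ ℂ _ (bbarFun σ ρ i)


/-!
Both directions are proved by induction along a reduced word `i :: b` of `ρ`, using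
`π_a π̄_i = π_{a ++ [i]} - π_a` when `i` is not a right descent of the permutation `σ` of `a`.

If `ℓ(σρ) < ℓ(σ) + ℓ(ρ)` and `i` is a right descent of `σ`, Matsumoto's theorem lets `π_σ` end
in `π_i`, and `π_i π̄_i = 0`. Otherwise both terms again come from non-additive pairs (for the
second one by a lifting property of lengths) and vanish by induction.

If `ℓ(σρ) = ℓ(σ) + ℓ(ρ)`, let `H_n(0)` act on `ℂ[S_n]`, with `π_i` sending `w` to the longer of
`w` and `s_i w`; read on positions `w⁻¹`, this `π_i` sorts the entries at `i`, `i + 1` into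
decreasing order, and such sorting operators satisfy the 0-Hecke relations. The coefficient of
`σρ` in `π_σ π̄_ρ · 1` is then `1`: the first term contributes `1` by induction, while the second
one is supported on permutations of length less than `ℓ(σρ)`.
-/

lemma min_max_comp_min_max {α β : Type*} [LinearOrder α] [LinearOrder β] (f : α → β) (a b : α) :
    (min (f (min a b)) (f (max a b)), max (f (min a b)) (f (max a b))) =
      (min (f a) (f b), max (f a) (f b)) := by
  rcases le_total a b with h | h <;> simp [h, min_comm, max_comm]

section SortPair

variable {ι α : Type*} [DecidableEq ι]

def sortPair [Lattice α] (x y : ι) (u : ι → α) : ι → α :=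
  Function.update (Function.update u x (u x ⊔ u y)) y (u x ⊓ u y)

lemma sortPair_idem [Lattice α] {x y : ι} (h : x ≠ y) (u : ι → α) :
    sortPair x y (sortPair x y u) = sortPair x y u := by
  funext z
  by_cases hx : z = x <;> by_cases hy : z = y <;> simp_all [sortPair, h.symm]

lemma sortPair_comm [Lattice α] {x y x' y' : ι} (hxx : x ≠ x') (hxy : x ≠ y') (hyx : y ≠ x')
    (hyy : y ≠ y') (u : ι → α) :
    sortPair x y (sortPair x' y' u) = sortPair x' y' (sortPair x y u) := by
  funext z
  simp only [sortPair, Function.update_apply]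
  by_cases hx : z = x <;> by_cases hy : z = y <;> by_cases hx' : z = x' <;>
    by_cases hy' : z = y' <;> simp_all [Ne.symm]

/-- Both sides sort the entries at `x`, `y`, `z` into decreasing order; at `y` this is the
median identity of distributive lattices. -/
lemma sortPair_braid [DistribLattice α] {x y z : ι} (hxy : x ≠ y) (hyz : y ≠ z) (hxz : x ≠ z)
    (u : ι → α) :
    sortPair x y (sortPair y z (sortPair x y u)) =
      sortPair y z (sortPair x y (sortPair y z u)) := by
  funext w
  simp only [sortPair, Function.update_apply]
  by_cases hx : w = x <;> by_cases hy : w = y <;> by_cases hz : w = z <;> simp_all [Ne.symm]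
  · rw [← sup_assoc (u x ⊔ u y), sup_eq_left.2 inf_le_sup, sup_assoc]
  · rw [inf_sup_left, inf_eq_right.2 inf_le_sup, inf_sup_right, inf_sup_left, sup_assoc]
  · rw [inf_assoc, inf_assoc, inf_eq_right.2 inf_le_sup]

lemma sortPair_eq_self [LinearOrder α] {x y : ι} {u : ι → α} (h : u y ≤ u x) :
    sortPair x y u = u := by
  simp [sortPair, h]

lemma sortPair_eq_comp_swap [LinearOrder α] {x y : ι} {u : ι → α} (h : u x ≤ u y) :
    sortPair x y u = u ∘ Equiv.swap x y := by
  funext z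
  by_cases hx : z = x <;> by_cases hy : z = y <;>
    simp_all [sortPair, Equiv.swap_apply_of_ne_of_ne]

end SortPair

section Permutations

open Finset

variable {n : ℕ}

def invSet (σ : SG n) : Finset (Fin (n + 1) × Fin (n + 1)) :=
  univ.filter fun p => p.1 < p.2 ∧ σ p.2 < σ p.1

@[simp] lemma mem_invSet {σ : SG n} {p : Fin (n + 1) × Fin (n + 1)} :
    p ∈ invSet σ ↔ p.1 < p.2 ∧ σ p.2 < σ p.1 := by
  simp [invSet]

lemma card_invSet (σ : SG n) : #(invSet σ) = len σ := rfl

lemma len_inv (σ : SG n) : len σ⁻¹ = len σ := by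
  rw [← card_invSet, ← card_invSet]
  refine card_nbij' (fun p => (σ⁻¹ p.2, σ⁻¹ p.1)) (fun p => (σ p.2, σ p.1)) ?_ ?_ ?_ ?_ <;>
    intro p <;> simp +contextual

lemma min_max_mem_invSet_iff (τ : SG n) {u v : Fin (n + 1)} (h : u ≠ v) :
    (min u v, max u v) ∈ invSet τ ↔ (u < v ↔ τ v < τ u) := by
  rcases h.lt_or_gt with h | h
  · simp [h, h.le]
  · simp [h, h.le, not_lt_of_gt h, (τ.injective.ne h.ne').le_iff_lt]

/-- An inversion `(x, y)` of `σ * ρ` gives the pair of values `{ρ x, ρ y}`, which is inverted by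
exactly one of `σ` and `ρ⁻¹`. -/
lemma len_mul (σ ρ : SG n) :
    len (σ * ρ) = #((invSet σ ∪ invSet ρ⁻¹) \ (invSet σ ∩ invSet ρ⁻¹)) := by
  rw [← card_invSet]
  refine card_nbij' (fun p => (min (ρ p.1) (ρ p.2), max (ρ p.1) (ρ p.2)))
    (fun q => (min (ρ⁻¹ q.1) (ρ⁻¹ q.2), max (ρ⁻¹ q.1) (ρ⁻¹ q.2))) ?_ ?_ ?_ ?_
  · rintro ⟨x, y⟩ h
    have hxy : ρ x ≠ ρ y := ρ.injective.ne (mem_invSet.1 h).1.ne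
    simp only [mem_coe, mem_invSet, Equiv.Perm.mul_apply] at h
    simp only [mem_coe, mem_union, mem_sdiff, mem_inter, min_max_mem_invSet_iff _ hxy,
      Equiv.Perm.coe_inv, Equiv.symm_apply_apply]
    grind
  · rintro ⟨x, y⟩ h
    simp only [mem_coe, mem_union, mem_sdiff, mem_inter, mem_invSet] at h
    have hxy : ρ⁻¹ x ≠ ρ⁻¹ y := ρ⁻¹.injective.ne (by grind)
    rw [mem_coe, min_max_mem_invSet_iff _ hxy]
    simp only [Equiv.Perm.mul_apply, Equiv.Perm.coe_inv, Equiv.apply_symm_apply] at h hxy ⊢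
    grind
  · rintro ⟨x, y⟩ h
    simp only [mem_coe, mem_invSet] at h
    simp [min_max_comp_min_max, h.1.le]
  · rintro ⟨x, y⟩ h
    simp only [mem_coe, mem_union, mem_sdiff, mem_inter, mem_invSet] at h
    have hxy : x < y := by tauto
    simp [min_max_comp_min_max (⇑ρ), hxy.le]

lemma len_add_len_eq (σ ρ : SG n) :
    len σ + len ρ = len (σ * ρ) + 2 * #(invSet σ ∩ invSet ρ⁻¹) := by
  have := card_union_add_card_inter (invSet σ) (invSet ρ⁻¹)
  have := card_le_card (inter_subset_union (s := invSet σ) (t := invSet ρ⁻¹))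
  rw [len_mul, card_sdiff_of_subset inter_subset_union]
  rw [card_invSet, card_invSet, len_inv] at *
  omega

lemma len_mul_le (σ ρ : SG n) : len (σ * ρ) ≤ len σ + len ρ := by
  have := len_add_len_eq σ ρ
  omega

lemma len_mul_eq_add_iff {σ ρ : SG n} :
    len (σ * ρ) = len σ + len ρ ↔ ∀ x y, x < y → σ y < σ x → ρ⁻¹ x < ρ⁻¹ y := by
  have := len_add_len_eq σ ρ
  have hρ : ∀ x y : Fin (n + 1), x < y → (¬ ρ⁻¹ y < ρ⁻¹ x ↔ ρ⁻¹ x < ρ⁻¹ y) := fun x y h =>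
    not_lt.trans (ρ⁻¹.injective.ne h.ne).le_iff_lt
  rw [show len (σ * ρ) = len σ + len ρ ↔ invSet σ ∩ invSet ρ⁻¹ = ∅ by rw [← card_eq_zero]; omega]
  simp only [eq_empty_iff_forall_notMem, mem_inter, mem_invSet, Prod.forall]
  grind

lemma sgen_apply_castSucc (i : Fin n) : sgen i i.castSucc = i.succ := Equiv.swap_apply_left _ _

lemma sgen_apply_succ (i : Fin n) : sgen i i.succ = i.castSucc := Equiv.swap_apply_right _ _

lemma sgen_apply_of_ne {i : Fin n} {x : Fin (n + 1)} (h₁ : x ≠ i.castSucc) (h₂ : x ≠ i.succ) :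
    sgen i x = x :=
  Equiv.swap_apply_of_ne_of_ne h₁ h₂

@[simp] lemma sgen_inv (i : Fin n) : (sgen i)⁻¹ = sgen i := Equiv.swap_inv _ _

@[simp] lemma sgen_mul_self (i : Fin n) : sgen i * sgen i = 1 := Equiv.swap_mul_self _ _

lemma sgen_mul_sgen_mul_sgen (i j : Fin n) :
    sgen i * sgen j * sgen i = Equiv.swap (sgen i j.castSucc) (sgen i j.succ) := by
  rw [Equiv.swap_apply_apply, sgen_inv]
  rfl

lemma sgen_mul_comm {i j : Fin n} (h : (i : ℕ) + 2 ≤ j) : sgen i * sgen j = sgen j * sgen i := by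
  have hconj := sgen_mul_sgen_mul_sgen i j
  rw [sgen_apply_of_ne, sgen_apply_of_ne] at hconj
  · rw [← mul_one (sgen i * sgen j), ← sgen_mul_self i, ← mul_assoc, hconj]
    rfl
  all_goals simp [Fin.ext_iff]; omega

lemma sgen_braid {i j : Fin n} (h : (i : ℕ) + 1 = j) :
    sgen i * sgen j * sgen i = sgen j * sgen i * sgen j := by
  have e : j.castSucc = i.succ := Fin.ext (by simp [← h])
  rw [sgen_mul_sgen_mul_sgen, sgen_mul_sgen_mul_sgen, e, sgen_apply_succ, ← e,
    sgen_apply_castSucc, sgen_apply_of_ne, sgen_apply_of_ne] <;> simp [Fin.ext_iff] <;> omega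

lemma invSet_sgen (i : Fin n) : invSet (sgen i) = {(i.castSucc, i.succ)} := by
  ext ⟨x, y⟩
  simp only [mem_invSet, mem_singleton, Prod.mk.injEq, sgen, Equiv.swap_apply_def]
  split_ifs <;> simp only [Fin.lt_def, Fin.ext_iff, Fin.val_castSucc, Fin.val_succ] at * <;> omega

lemma len_sgen (i : Fin n) : len (sgen i) = 1 := by
  rw [← card_invSet, invSet_sgen, card_singleton]

lemma len_sgen_mul_add (i : Fin n) (σ : SG n) :
    len (sgen i * σ) + 2 * (if σ⁻¹ i.succ < σ⁻¹ i.castSucc then 1 else 0) = len σ + 1 := by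
  have := len_add_len_eq (sgen i) σ
  rw [invSet_sgen, singleton_inter, len_sgen] at this
  by_cases h : σ⁻¹ i.succ < σ⁻¹ i.castSucc
  · rw [if_pos (mem_invSet.2 ⟨Fin.castSucc_lt_succ, h⟩), card_singleton] at this
    rw [if_pos h]
    omega
  · rw [if_neg fun hm => h (mem_invSet.1 hm).2, card_empty] at this
    rw [if_neg h]
    omega

lemma mem_DesL_iff {i : Fin n} {σ : SG n} : i ∈ DesL σ ↔ σ⁻¹ i.succ < σ⁻¹ i.castSucc := by
  have := len_sgen_mul_add i σ
  change len (sgen i * σ) < len σ ↔ _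
  split_ifs at this with h <;> simp only [h, iff_true, iff_false] <;> omega

lemma len_sgen_mul_of_mem_DesL {i : Fin n} {σ : SG n} (h : i ∈ DesL σ) :
    len (sgen i * σ) + 1 = len σ := by
  have := len_sgen_mul_add i σ
  rw [if_pos (mem_DesL_iff.1 h)] at this
  omega

lemma len_sgen_mul_of_notMem_DesL {i : Fin n} {σ : SG n} (h : i ∉ DesL σ) :
    len (sgen i * σ) = len σ + 1 := by
  have := len_sgen_mul_add i σ
  rw [if_neg (mt mem_DesL_iff.2 h)] at this
  omega

lemma mem_DesL_sgen_mul_iff {i : Fin n} {σ : SG n} : i ∈ DesL (sgen i * σ) ↔ i ∉ DesL σ := by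
  constructor
  · intro h h'
    have := len_sgen_mul_of_mem_DesL h
    rw [← mul_assoc, sgen_mul_self, one_mul] at this
    have := len_sgen_mul_of_mem_DesL h'
    omega
  · intro h
    show len (sgen i * (sgen i * σ)) < len (sgen i * σ)
    rw [← mul_assoc, sgen_mul_self, one_mul, len_sgen_mul_of_notMem_DesL h]
    omega

lemma mem_DesR_iff_mem_DesL_inv {i : Fin n} {σ : SG n} : i ∈ DesR σ ↔ i ∈ DesL σ⁻¹ := by
  change len (σ * sgen i) < len σ ↔ len (sgen i * σ⁻¹) < len σ⁻¹
  rw [← len_inv (σ * sgen i), mul_inv_rev, sgen_inv, len_inv]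

lemma mem_DesR_iff {i : Fin n} {σ : SG n} : i ∈ DesR σ ↔ σ i.succ < σ i.castSucc := by
  rw [mem_DesR_iff_mem_DesL_inv, mem_DesL_iff, inv_inv]

lemma len_mul_sgen_of_mem_DesR {i : Fin n} {σ : SG n} (h : i ∈ DesR σ) :
    len (σ * sgen i) + 1 = len σ := by
  rw [← len_inv, mul_inv_rev, sgen_inv, ← len_inv σ]
  exact len_sgen_mul_of_mem_DesL (mem_DesR_iff_mem_DesL_inv.1 h)

lemma len_mul_sgen_of_notMem_DesR {i : Fin n} {σ : SG n} (h : i ∉ DesR σ) :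
    len (σ * sgen i) = len σ + 1 := by
  rw [← len_inv, mul_inv_rev, sgen_inv, ← len_inv σ]
  exact len_sgen_mul_of_notMem_DesL (mt mem_DesR_iff_mem_DesL_inv.2 h)

lemma mem_DesR_mul_sgen_iff {i : Fin n} {σ : SG n} : i ∈ DesR (σ * sgen i) ↔ i ∉ DesR σ := by
  rw [mem_DesR_iff_mem_DesL_inv, mem_DesR_iff_mem_DesL_inv, mul_inv_rev, sgen_inv,
    mem_DesL_sgen_mul_iff]

lemma exists_mem_DesL_of_ne_one {σ : SG n} (hσ : σ ≠ 1) : ∃ i, i ∈ DesL σ := by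
  by_contra! h
  have hmono : StrictMono ⇑σ⁻¹ := Fin.strictMono_iff_lt_succ.2 fun i =>
    (not_lt.1 (mt mem_DesL_iff.2 (h i))).lt_of_ne (σ⁻¹.injective.ne Fin.castSucc_lt_succ.ne)
  exact hσ (inv_eq_one.1 (Equiv.ext (congrFun hmono.eq_id)))

lemma mem_DesL_sgen_mul_of_far {i j : Fin n} (h : (i : ℕ) + 2 ≤ j ∨ (j : ℕ) + 2 ≤ i)
    {σ : SG n} : j ∈ DesL (sgen i * σ) ↔ j ∈ DesL σ := by
  simp only [mem_DesL_iff, mul_inv_rev, sgen_inv, Equiv.Perm.mul_apply]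
  rw [sgen_apply_of_ne, sgen_apply_of_ne] <;> simp [Fin.ext_iff] <;> omega

lemma mem_DesL_sgen_mul_of_adjacent {i j : Fin n} (h : (i : ℕ) + 1 = j ∨ (j : ℕ) + 1 = i) {σ : SG n}
    (hi : i ∈ DesL σ) (hj : j ∈ DesL σ) :
    j ∈ DesL (sgen i * σ) ∧ i ∈ DesL (sgen j * (sgen i * σ)) := by
  simp only [mem_DesL_iff, mul_inv_rev, sgen_inv, Equiv.Perm.mul_apply] at *
  rcases h with h | h
  · have e : j.castSucc = i.succ := Fin.ext (by simp [← h])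
    have h₁ : sgen i j.castSucc = i.castSucc := by rw [e, sgen_apply_succ]
    have h₂ : sgen j i.succ = j.succ := by rw [← e, sgen_apply_castSucc]
    simp (disch := (simp [Fin.ext_iff]; omega)) only [h₁, h₂, sgen_apply_castSucc,
      sgen_apply_of_ne]
    grind
  · have e : i.castSucc = j.succ := Fin.ext (by simp [← h])
    have h₁ : sgen i j.succ = i.succ := by rw [← e, sgen_apply_castSucc]
    have h₂ : sgen j i.castSucc = j.castSucc := by rw [e, sgen_apply_succ]
    simp (disch := (simp [Fin.ext_iff]; omega)) only [h₁, h₂, sgen_apply_succ,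
      sgen_apply_of_ne]
    grind

/-- Each case is `h` applied to a pair among `x`, `y`, `i`, `i + 1`, followed by transitivity. -/
lemma len_mul_sgen_mul_eq_add {i : Fin n} {σ τ : SG n} (hσ : i ∉ DesR σ) (hτ : i ∉ DesL τ)
    (h : len (σ * τ) = len σ + len τ) :
    len (σ * (sgen i * τ)) = len σ + len (sgen i * τ) := by
  rw [len_mul_eq_add_iff] at h ⊢
  rw [mem_DesR_iff, not_lt] at hσ
  rw [mem_DesL_iff, not_lt] at hτ
  have hne : i.castSucc ≠ i.succ := Fin.castSucc_lt_succ.ne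
  replace hσ : σ i.castSucc < σ i.succ := hσ.lt_of_ne (σ.injective.ne hne)
  replace hτ : τ⁻¹ i.castSucc < τ⁻¹ i.succ := hτ.lt_of_ne (τ⁻¹.injective.ne hne)
  intro x y hxy hyx
  simp only [mul_inv_rev, sgen_inv, Equiv.Perm.mul_apply]
  simp only [sgen, Equiv.swap_apply_def]
  split_ifs <;> grind

lemma len_prod_map_sgen_le (l : List (Fin n)) : len (l.map sgen).prod ≤ l.length := by
  induction l with
  | nil => simp [len_one]
  | cons i l ih =>
    simp only [List.map_cons, List.prod_cons, List.length_cons]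
    linarith [len_mul_le (sgen i) (l.map sgen).prod, len_sgen i]

lemma isReducedWord_of_length_le {l : List (Fin n)} {σ : SG n} (hprod : (l.map sgen).prod = σ)
    (hlen : l.length ≤ len σ) : IsReducedWord l σ :=
  ⟨hprod, le_antisymm hlen (hprod ▸ len_prod_map_sgen_le l)⟩

lemma isReducedWord_cons_iff {i : Fin n} {l : List (Fin n)} {σ : SG n} :
    IsReducedWord (i :: l) σ ↔ i ∈ DesL σ ∧ IsReducedWord l (sgen i * σ) := by
  constructor
  · rintro ⟨hprod, hlen⟩
    simp only [List.map_cons, List.prod_cons, List.length_cons] at hprod hlen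
    have hl : (l.map sgen).prod = sgen i * σ := by
      rw [← hprod, ← mul_assoc, sgen_mul_self, one_mul]
    have h₁ := len_prod_map_sgen_le l
    have h₂ := len_mul_le (sgen i) (sgen i * σ)
    rw [hl] at h₁
    rw [← mul_assoc, sgen_mul_self, one_mul, len_sgen] at h₂
    exact ⟨show len (sgen i * σ) < len σ by omega, isReducedWord_of_length_le hl (by omega)⟩
  · rintro ⟨hi, hprod, hlen⟩
    refine ⟨by simp [hprod, ← mul_assoc], ?_⟩
    simp only [List.length_cons, hlen, len_sgen_mul_of_mem_DesL hi]

lemma isReducedWord_append_singleton_iff {i : Fin n} {l : List (Fin n)} {σ : SG n} :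
    IsReducedWord (l ++ [i]) σ ↔ i ∈ DesR σ ∧ IsReducedWord l (σ * sgen i) := by
  constructor
  · rintro ⟨hprod, hlen⟩
    simp only [List.map_append, List.map_cons, List.map_nil, List.prod_append, List.prod_cons,
      List.prod_nil, mul_one, List.length_append, List.length_cons, List.length_nil] at hprod hlen
    have hl : (l.map sgen).prod = σ * sgen i := by
      rw [← hprod, mul_assoc, sgen_mul_self, mul_one]
    have h₁ := len_prod_map_sgen_le l
    have h₂ := len_mul_le (σ * sgen i) (sgen i)
    rw [hl] at h₁
    rw [mul_assoc, sgen_mul_self, mul_one, len_sgen] at h₂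
    exact ⟨show len (σ * sgen i) < len σ by omega, isReducedWord_of_length_le hl (by omega)⟩
  · rintro ⟨hi, hprod, hlen⟩
    refine ⟨by simp [hprod, mul_assoc], ?_⟩
    simp only [List.length_append, List.length_singleton, hlen, len_mul_sgen_of_mem_DesR hi]

lemma IsReducedWord.append_singleton {i : Fin n} {l : List (Fin n)} {σ : SG n}
    (hl : IsReducedWord l σ) (hi : i ∉ DesR σ) : IsReducedWord (l ++ [i]) (σ * sgen i) :=
  isReducedWord_append_singleton_iff.2
    ⟨mem_DesR_mul_sgen_iff.2 hi, by rwa [mul_assoc, sgen_mul_self, mul_one]⟩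

lemma exists_isReducedWord (σ : SG n) : ∃ l, IsReducedWord l σ := by
  induction h : len σ generalizing σ with
  | zero =>
    obtain rfl : σ = 1 := by
      by_contra hσ
      obtain ⟨i, hi⟩ := exists_mem_DesL_of_ne_one hσ
      have := len_sgen_mul_of_mem_DesL hi
      omega
    exact ⟨[], rfl, by simp [len_one]⟩
  | succ m ih =>
    obtain ⟨i, hi⟩ := exists_mem_DesL_of_ne_one (σ := σ) (by rintro rfl; simp [len_one] at h)
    obtain ⟨l, hl⟩ := ih (sgen i * σ) (by have := len_sgen_mul_of_mem_DesL hi; omega)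
    exact ⟨i :: l, isReducedWord_cons_iff.2 ⟨hi, hl⟩⟩

/-- Matsumoto's theorem. Two reduced words of `σ` with first letters `s < t` are, by induction,
equivalent to `s t c` and `t s c` (if `s`, `t` commute) or to `s t s c` and `t s t c` (if they are
adjacent), for a common reduced word `c`. -/
theorem IsReducedWord.prod_map_eq {M : Type*} [Monoid M] {f : Fin n → M}
    (hcomm : ∀ i j : Fin n, (i : ℕ) + 2 ≤ j → f i * f j = f j * f i)
    (hbraid : ∀ i j : Fin n, (i : ℕ) + 1 = j → f i * f j * f i = f j * f i * f j)
    {a b : List (Fin n)} {σ : SG n} (ha : IsReducedWord a σ) (hb : IsReducedWord b σ) :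
    (a.map f).prod = (b.map f).prod := by
  induction hm : len σ using Nat.strong_induction_on generalizing a b σ with
  | _ m ih =>
  match a, b with
  | [], [] => rfl
  | [], _ :: _ | _ :: _, [] =>
    have := ha.2.trans hb.2.symm
    simp at this
  | s :: a, t :: b =>
    rw [isReducedWord_cons_iff] at ha hb
    wlog hst : (s : ℕ) ≤ t generalizing s t a b
    · exact (this t b s a hb ha (by omega)).symm
    have hlt : len (sgen s * σ) < m := by have := len_sgen_mul_of_mem_DesL ha.1; omega
    have hlt' : len (sgen t * σ) < m := by have := len_sgen_mul_of_mem_DesL hb.1; omega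
    simp only [List.map_cons, List.prod_cons]
    rcases (show (s : ℕ) = t ∨ (s : ℕ) + 2 ≤ t ∨ (s : ℕ) + 1 = t by omega) with h | h | h
    · obtain rfl := Fin.ext h
      rw [ih _ hlt ha.2 hb.2 rfl]
    · obtain ⟨c, hc⟩ := exists_isReducedWord (sgen t * (sgen s * σ))
      have hc' : IsReducedWord c (sgen s * (sgen t * σ)) := by
        rwa [← mul_assoc, sgen_mul_comm h, mul_assoc]
      have ht : t ∈ DesL (sgen s * σ) := (mem_DesL_sgen_mul_of_far (Or.inl h)).2 hb.1
      have hs : s ∈ DesL (sgen t * σ) := (mem_DesL_sgen_mul_of_far (Or.inr h)).2 ha.1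
      rw [ih _ hlt ha.2 (isReducedWord_cons_iff.2 ⟨ht, hc⟩) rfl,
        ih _ hlt' hb.2 (isReducedWord_cons_iff.2 ⟨hs, hc'⟩) rfl]
      simp only [List.map_cons, List.prod_cons, ← mul_assoc, hcomm s t h]
    · obtain ⟨c, hc⟩ := exists_isReducedWord (sgen s * (sgen t * (sgen s * σ)))
      have hc' : IsReducedWord c (sgen t * (sgen s * (sgen t * σ))) := by
        rwa [← mul_assoc, ← mul_assoc, ← sgen_braid h, mul_assoc, mul_assoc]
      obtain ⟨ht, hs⟩ := mem_DesL_sgen_mul_of_adjacent (Or.inl h) ha.1 hb.1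
      obtain ⟨hs', ht'⟩ := mem_DesL_sgen_mul_of_adjacent (Or.inr h) hb.1 ha.1
      rw [ih _ hlt ha.2 (isReducedWord_cons_iff.2 ⟨ht, isReducedWord_cons_iff.2 ⟨hs, hc⟩⟩) rfl,
        ih _ hlt' hb.2 (isReducedWord_cons_iff.2 ⟨hs', isReducedWord_cons_iff.2 ⟨ht', hc'⟩⟩) rfl]
      simp only [List.map_cons, List.prod_cons, ← mul_assoc, hbraid s t h]

end Permutations

section HeckeAlgebra

variable {n : ℕ}

lemma hpi_mul_self (i : Fin n) : hpi i * hpi i = hpi i := by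
  simpa only [hpi, ← map_mul] using RingQuot.mkAlgHom_rel ℂ (HRel.idem i)

lemma hpi_comm {i j : Fin n} (h : (i : ℕ) + 2 ≤ j) : hpi i * hpi j = hpi j * hpi i := by
  simpa only [hpi, ← map_mul] using RingQuot.mkAlgHom_rel ℂ (HRel.comm i j h)

lemma hpi_braid {i j : Fin n} (h : (i : ℕ) + 1 = j) :
    hpi i * hpi j * hpi i = hpi j * hpi i * hpi j := by
  simpa only [hpi, ← map_mul] using RingQuot.mkAlgHom_rel ℂ (HRel.braid i j h)

lemma hpi_mul_hpibar (i : Fin n) : hpi i * hpibar i = 0 := by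
  rw [hpibar, mul_sub, mul_one, hpi_mul_self, sub_self]

def piWord (l : List (Fin n)) : Hecke n := (l.map hpi).prod

def pibarWord (l : List (Fin n)) : Hecke n := (l.map hpibar).prod

lemma exists_piPerm_eq (σ : SG n) : ∃ a, IsReducedWord a σ ∧ piPerm σ = piWord a := by
  have h := exists_isReducedWord σ
  exact ⟨h.choose, h.choose_spec, by rw [piPerm, dif_pos h, piWord]⟩

lemma exists_pibarPerm_eq (ρ : SG n) : ∃ b, IsReducedWord b ρ ∧ pibarPerm ρ = pibarWord b := by
  have h := exists_isReducedWord ρ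
  exact ⟨h.choose, h.choose_spec, by rw [pibarPerm, dif_pos h, pibarWord]⟩

lemma IsReducedWord.piWord_eq {a b : List (Fin n)} {σ : SG n} (ha : IsReducedWord a σ)
    (hb : IsReducedWord b σ) : piWord a = piWord b :=
  ha.prod_map_eq (fun _ _ => hpi_comm) (fun _ _ => hpi_braid) hb

lemma piWord_mul_hpi_of_mem_DesR {a : List (Fin n)} {σ : SG n} {i : Fin n}
    (ha : IsReducedWord a σ) (hi : i ∈ DesR σ) : piWord a * hpi i = piWord a := by
  obtain ⟨c, hc⟩ := exists_isReducedWord (σ * sgen i)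
  rw [ha.piWord_eq (isReducedWord_append_singleton_iff.2 ⟨hi, hc⟩), piWord, List.map_append,
    List.prod_append, mul_assoc]
  simp [hpi_mul_self]

lemma piWord_mul_pibarWord_cons (a b : List (Fin n)) (i : Fin n) :
    piWord a * pibarWord (i :: b) = piWord (a ++ [i]) * pibarWord b - piWord a * pibarWord b := by
  simp [piWord, pibarWord, hpibar, mul_sub, sub_mul, mul_assoc]

theorem piWord_mul_pibarWord_eq_zero {a b : List (Fin n)} {σ ρ : SG n}
    (ha : IsReducedWord a σ) (hb : IsReducedWord b ρ) (h : len (σ * ρ) ≠ len σ + len ρ) :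
    piWord a * pibarWord b = 0 := by
  induction b generalizing a σ ρ with
  | nil =>
    obtain rfl : ρ = 1 := hb.1.symm
    simp [len_one] at h
  | cons i b ih =>
    obtain ⟨hρ, hb⟩ := isReducedWord_cons_iff.1 hb
    by_cases hσ : i ∈ DesR σ
    · rw [← piWord_mul_hpi_of_mem_DesR ha hσ, pibarWord, List.map_cons, List.prod_cons,
        mul_assoc, ← mul_assoc (hpi i), hpi_mul_hpibar, zero_mul, mul_zero]
    have hmul : σ * sgen i * (sgen i * ρ) = σ * ρ := by
      rw [mul_assoc, ← mul_assoc (sgen i), sgen_mul_self, one_mul]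
    have := len_sgen_mul_of_mem_DesL hρ
    have := len_mul_sgen_of_notMem_DesR hσ
    rw [piWord_mul_pibarWord_cons, ih (ha.append_singleton hσ) hb (by rw [hmul]; omega),
      ih ha hb fun hadd => h ?_, sub_zero]
    have := len_mul_sgen_mul_eq_add hσ (fun h' => mem_DesL_sgen_mul_iff.1 h' hρ) hadd
    rwa [← mul_assoc (sgen i), sgen_mul_self, one_mul] at this

def demazureMul (i : Fin n) (w : SG n) : SG n := if i ∈ DesL w then w else sgen i * w

lemma len_demazureMul_le (i : Fin n) (w : SG n) : len (demazureMul i w) ≤ len w + 1 := by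
  unfold demazureMul
  split_ifs with h
  · omega
  · exact (len_sgen_mul_of_notMem_DesL h).le

lemma coe_inv_demazureMul (i : Fin n) (w : SG n) :
    ⇑(demazureMul i w)⁻¹ = sortPair i.castSucc i.succ ⇑w⁻¹ := by
  rw [demazureMul]
  split_ifs with h
  · exact (sortPair_eq_self (mem_DesL_iff.1 h).le).symm
  · rw [sortPair_eq_comp_swap (not_lt.1 (mt mem_DesL_iff.2 h)), mul_inv_rev, sgen_inv]
    rfl

lemma demazureMul_idem (i : Fin n) (w : SG n) :
    demazureMul i (demazureMul i w) = demazureMul i w :=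
  inv_injective <| DFunLike.coe_injective <| by
    simp only [coe_inv_demazureMul, sortPair_idem Fin.castSucc_lt_succ.ne]

lemma demazureMul_comm {i j : Fin n} (h : (i : ℕ) + 2 ≤ j) (w : SG n) :
    demazureMul i (demazureMul j w) = demazureMul j (demazureMul i w) :=
  inv_injective <| DFunLike.coe_injective <| by
    simp only [coe_inv_demazureMul]
    apply sortPair_comm <;> simp [Fin.ext_iff] <;> omega

lemma demazureMul_braid {i j : Fin n} (h : (i : ℕ) + 1 = j) (w : SG n) :
    demazureMul i (demazureMul j (demazureMul i w)) =
      demazureMul j (demazureMul i (demazureMul j w)) :=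
  inv_injective <| DFunLike.coe_injective <| by
    have e : j.castSucc = i.succ := Fin.ext (by simp [← h])
    simp only [coe_inv_demazureMul, e]
    apply sortPair_braid <;> simp [Fin.ext_iff] <;> omega

def heckeRep : Hecke n →ₐ[ℂ] Module.End ℂ (SG n →₀ ℂ) :=
  RingQuot.liftAlgHom ℂ ⟨FreeAlgebra.lift ℂ fun i => Finsupp.lmapDomain ℂ ℂ (demazureMul i), by
    rintro _ _ (i | ⟨i, j, h⟩ | ⟨i, j, h⟩) <;>
      simp only [map_mul, FreeAlgebra.lift_ι_apply, Module.End.mul_eq_comp,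
        ← Finsupp.lmapDomain_comp] <;>
      congr 1 <;> funext w
    · exact demazureMul_idem i w
    · exact demazureMul_braid h w
    · exact demazureMul_comm h w⟩

lemma heckeRep_hpi (i : Fin n) : heckeRep (hpi i) = Finsupp.lmapDomain ℂ ℂ (demazureMul i) := by
  rw [hpi, heckeRep, RingQuot.liftAlgHom_mkAlgHom_apply, FreeAlgebra.lift_ι_apply]

def lenLE (m : ℕ) : Submodule ℂ (SG n →₀ ℂ) := Finsupp.supported ℂ ℂ {w | len w ≤ m}

lemma heckeRep_hpi_mem_lenLE (i : Fin n) {m : ℕ} {v : SG n →₀ ℂ} (hv : v ∈ lenLE m) :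
    heckeRep (hpi i) v ∈ lenLE (m + 1) := by
  rw [heckeRep_hpi]
  refine Finsupp.supported_comap_lmapDomain ℂ ℂ _ _ (Finsupp.supported_mono ?_ hv)
  intro w (hw : len w ≤ m)
  have := len_demazureMul_le i w
  show len (demazureMul i w) ≤ m + 1
  omega

lemma heckeRep_hpibar_mem_lenLE (i : Fin n) {m : ℕ} {v : SG n →₀ ℂ} (hv : v ∈ lenLE m) :
    heckeRep (hpibar i) v ∈ lenLE (m + 1) := by
  rw [hpibar, map_sub, map_one, LinearMap.sub_apply, Module.End.one_apply]
  exact sub_mem (heckeRep_hpi_mem_lenLE i hv)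
    (Finsupp.supported_mono (fun w (hw : len w ≤ m) => show len w ≤ m + 1 by omega) hv)

lemma heckeRep_prod_mem_lenLE {g : Fin n → Hecke n}
    (hg : ∀ i m v, v ∈ lenLE m → heckeRep (g i) v ∈ lenLE (m + 1)) (l : List (Fin n)) {m : ℕ}
    {v : SG n →₀ ℂ} (hv : v ∈ lenLE m) : heckeRep (l.map g).prod v ∈ lenLE (m + l.length) := by
  induction l with
  | nil => simpa using hv
  | cons i l ih =>
    rw [List.map_cons, List.prod_cons, map_mul, Module.End.mul_apply, List.length_cons,
      ← add_assoc]
    exact hg _ _ _ ih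

lemma heckeRep_piWord_mul_pibarWord_mem_lenLE (a b : List (Fin n)) :
    heckeRep (piWord a * pibarWord b) (Finsupp.single 1 1) ∈ lenLE (a.length + b.length) := by
  rw [map_mul, Module.End.mul_apply, piWord, pibarWord, add_comm]
  refine heckeRep_prod_mem_lenLE (fun i _ _ => heckeRep_hpi_mem_lenLE i) a ?_
  simpa using heckeRep_prod_mem_lenLE (fun i _ _ => heckeRep_hpibar_mem_lenLE i) b (m := 0)
    (Finsupp.single_mem_supported ℂ _ (by simp [len_one]))

lemma heckeRep_piWord_single_one {a : List (Fin n)} {σ : SG n} (ha : IsReducedWord a σ) :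
    heckeRep (piWord a) (Finsupp.single 1 1) = Finsupp.single σ 1 := by
  induction a generalizing σ with
  | nil =>
    obtain rfl : σ = 1 := ha.1.symm
    simp [piWord]
  | cons i a ih =>
    obtain ⟨hi, ha⟩ := isReducedWord_cons_iff.1 ha
    have ih' := ih ha
    rw [piWord] at ih' ⊢
    rw [List.map_cons, List.prod_cons, map_mul, Module.End.mul_apply, ih', heckeRep_hpi,
      Finsupp.lmapDomain_apply, Finsupp.mapDomain_single, demazureMul,
      if_neg fun h => mem_DesL_sgen_mul_iff.1 h hi, ← mul_assoc, sgen_mul_self, one_mul]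

theorem heckeRep_piWord_mul_pibarWord_apply {a b : List (Fin n)} {σ ρ : SG n}
    (ha : IsReducedWord a σ) (hb : IsReducedWord b ρ) (h : len (σ * ρ) = len σ + len ρ) :
    heckeRep (piWord a * pibarWord b) (Finsupp.single 1 1) (σ * ρ) = 1 := by
  induction b generalizing a σ ρ with
  | nil =>
    obtain rfl : ρ = 1 := hb.1.symm
    simp [pibarWord, heckeRep_piWord_single_one ha]
  | cons i b ih =>
    obtain ⟨hρ, hb⟩ := isReducedWord_cons_iff.1 hb
    have := len_sgen_mul_of_mem_DesL hρ
    have hmul : σ * sgen i * (sgen i * ρ) = σ * ρ := by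
      rw [mul_assoc, ← mul_assoc (sgen i), sgen_mul_self, one_mul]
    have hσ : i ∉ DesR σ := fun hσ => by
      have := len_mul_sgen_of_mem_DesR hσ
      have := len_mul_le (σ * sgen i) (sgen i * ρ)
      rw [hmul] at this
      omega
    have := len_mul_sgen_of_notMem_DesR hσ
    rw [piWord_mul_pibarWord_cons, map_sub, LinearMap.sub_apply, Finsupp.sub_apply,
      (Finsupp.mem_supported' _ _).1 (heckeRep_piWord_mul_pibarWord_mem_lenLE a b) _
        (by simp [ha.2, hb.2, h]; omega), sub_zero, ← hmul]
    exact ih (ha.append_singleton hσ) hb (by rw [hmul]; omega)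

end HeckeAlgebra

/-- `π_σ π̄_ρ ≠ 0` iff `ℓ(σρ) = ℓ(σ) + ℓ(ρ)`. -/
theorem stmt0 (n : ℕ) (σ ρ : SG n) :
    piPerm σ * pibarPerm ρ ≠ 0 ↔ len (σ * ρ) = len σ + len ρ := by
  obtain ⟨a, ha, hσ⟩ := exists_piPerm_eq σ
  obtain ⟨b, hb, hρ⟩ := exists_pibarPerm_eq ρ
  rw [hσ, hρ]
  refine ⟨fun h => by_contra fun hne => h (piWord_mul_pibarWord_eq_zero ha hb hne), fun h h0 => ?_⟩
  simpa [h0] using heckeRep_piWord_mul_pibarWord_apply ha hb h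

end
end

section
/- Suppose γ ∈ [σ,ρ]_L and i ∉ Des_L(γ). Then s_iγ ∈ [σ,ρ]_L if and only if i ∉ Des_L(γ ρ^{-1} w_0). -/
open scoped Classical

noncomputable section

/-! Record the inversions of a permutation as the ordered pairs of positions whose order it
reverses. The inversions of `γ * σ` are the symmetric difference of those of `σ` and the
`σ`-relabelled inversions of `γ`, so `len (γ * σ) = len σ + len γ` exactly when these two sets are
disjoint, i.e. when every inversion of `σ` survives in `γ * σ`: the left weak order is inclusion of
inversion sets. If `i ∉ Des_L(γ)` then `a = γ⁻¹ i < b = γ⁻¹ (i+1)` and `s_i γ` has exactly one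
new inversion, the pair `(a, b)`; hence `s_i γ ≤_L ρ` iff `ρ b < ρ a`. Since
`(γ ρ⁻¹ w₀)⁻¹ = w₀ ρ γ⁻¹` and `w₀` reverses the order, that is the condition
`i ∉ Des_L(γ ρ⁻¹ w₀)`. -/

open Finset

open scoped symmDiff in
theorem Finset.card_symmDiff_add_two_mul_card_inter {α : Type*} [DecidableEq α]
    (s t : Finset α) : #(s ∆ t) + 2 * #(s ∩ t) = #s + #t := by
  rw [Finset.symmDiff_def, card_union_of_disjoint disjoint_sdiff_sdiff,
    ← card_sdiff_add_card_inter s t, ← card_sdiff_add_card_inter t s, inter_comm t s]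
  ring

section Inversions

variable {n : ℕ}

/-- Both orientations of every inversion are recorded, so that `inversions_mul` needs no
reordering of pairs. -/
def inversions (w : SG n) : Finset (Fin (n + 1) × Fin (n + 1)) :=
  univ.filter fun p => Xor (p.1 < p.2) (w p.1 < w p.2)

lemma mem_inversions {w : SG n} {p q : Fin (n + 1)} :
    (p, q) ∈ inversions w ↔ Xor (p < q) (w p < w q) := by
  simp [inversions]

lemma mem_inversions_comm {w : SG n} {p q : Fin (n + 1)} :
    (p, q) ∈ inversions w ↔ (q, p) ∈ inversions w := by
  have : p ≠ q → w p ≠ w q := w.injective.ne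
  simp only [mem_inversions, xor_def]
  grind

lemma pair_subset_inversions_iff {w : SG n} {p q : Fin (n + 1)} :
    {(p, q), (q, p)} ⊆ inversions w ↔ (p, q) ∈ inversions w := by
  rw [insert_subset_iff, singleton_subset_iff, ← mem_inversions_comm, and_self]

lemma disjoint_inversions_pair_iff {w : SG n} {p q : Fin (n + 1)} :
    Disjoint (inversions w) {(p, q), (q, p)} ↔ (p, q) ∉ inversions w := by
  rw [disjoint_insert_right, disjoint_singleton_right, ← mem_inversions_comm, and_self]

lemma card_inversions (w : SG n) : #(inversions w) = 2 * len w := by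
  set S := univ.filter fun p : Fin (n + 1) × Fin (n + 1) => p.1 < p.2 ∧ w p.2 < w p.1
  have hfwd : (inversions w).filter (fun p => p.1 < p.2) = S := by
    ext ⟨p, q⟩
    have : p ≠ q → w p ≠ w q := w.injective.ne
    simp only [mem_filter, mem_inversions, xor_def, S, mem_univ, true_and]
    grind
  have hbwd : (inversions w).filter (fun p => ¬ p.1 < p.2) =
      S.map (Equiv.prodComm _ _).toEmbedding := by
    ext ⟨p, q⟩
    have : p ≠ q → w p ≠ w q := w.injective.ne
    rw [mem_map_equiv, mem_filter, mem_inversions_comm]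
    simp only [mem_inversions, xor_def, S, mem_filter, mem_univ, true_and, Equiv.prodComm_symm,
      Equiv.prodComm_apply, Prod.swap_prod_mk]
    grind
  rw [← card_filter_add_card_filter_not (fun p : Fin (n + 1) × Fin (n + 1) => p.1 < p.2),
    hfwd, hbwd, card_map, len]
  ring

lemma mem_inversions_mul {γ σ : SG n} {p q : Fin (n + 1)} :
    (p, q) ∈ inversions (γ * σ) ↔ Xor ((p, q) ∈ inversions σ) ((σ p, σ q) ∈ inversions γ) := by
  simp only [mem_inversions, Equiv.Perm.mul_apply, xor_def]
  grind

open scoped symmDiff in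
lemma inversions_mul (γ σ : SG n) :
    inversions (γ * σ) =
      inversions σ ∆ (inversions γ).map (σ.prodCongr σ).symm.toEmbedding := by
  ext ⟨p, q⟩
  rw [mem_inversions_mul, mem_symmDiff, mem_map_equiv, xor_def]
  rfl

lemma len_mul_add_card_inter (γ σ : SG n) :
    len (γ * σ) + #(inversions σ ∩ (inversions γ).map (σ.prodCongr σ).symm.toEmbedding) =
      len σ + len γ := by
  have := card_symmDiff_add_two_mul_card_inter (inversions σ)
    ((inversions γ).map (σ.prodCongr σ).symm.toEmbedding)
  rw [← inversions_mul, card_map, card_inversions, card_inversions, card_inversions] at this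
  omega

lemma len_mul_eq_add_iff_s9 {γ σ : SG n} :
    len (γ * σ) = len σ + len γ ↔ inversions σ ⊆ inversions (γ * σ) := by
  rw [← len_mul_add_card_inter γ σ, inversions_mul, left_eq_add, card_eq_zero,
    ← disjoint_iff_inter_eq_empty]
  simp only [subset_iff, mem_symmDiff, disjoint_left]
  exact forall_congr' fun _ => by tauto

lemma leL_iff_inversions_subset {σ ρ : SG n} : leL σ ρ ↔ inversions σ ⊆ inversions ρ := by
  constructor
  · rintro ⟨γ, rfl, h⟩
    exact len_mul_eq_add_iff_s9.1 h
  · intro h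
    obtain ⟨γ, rfl⟩ : ∃ γ, ρ = γ * σ := ⟨ρ * σ⁻¹, by group⟩
    exact ⟨γ, rfl, len_mul_eq_add_iff_s9.2 h⟩

lemma mem_inversions_of_lt {w : SG n} {p q : Fin (n + 1)} (h : p < q) :
    (p, q) ∈ inversions w ↔ w q < w p := by
  have := w.injective.ne h.ne
  rw [mem_inversions, xor_def]
  grind

lemma inversions_sgen (i : Fin n) :
    inversions (sgen i) = {(i.castSucc, i.succ), (i.succ, i.castSucc)} := by
  ext ⟨p, q⟩
  simp only [mem_inversions, xor_def, sgen, Equiv.swap_apply_def, mem_insert, mem_singleton,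
    Prod.mk.injEq]
  split_ifs <;> simp only [Fin.lt_def, Fin.ext_iff, Fin.val_castSucc, Fin.val_succ] at * <;> omega

lemma map_inversions_sgen (i : Fin n) (w : SG n) :
    (inversions (sgen i)).map (w.prodCongr w).symm.toEmbedding =
      {(w⁻¹ i.castSucc, w⁻¹ i.succ), (w⁻¹ i.succ, w⁻¹ i.castSucc)} := by
  simp [inversions_sgen, map_insert, Equiv.Perm.inv_def]

lemma mem_desL_iff {w : SG n} {i : Fin n} :
    i ∈ DesL w ↔ (w⁻¹ i.castSucc, w⁻¹ i.succ) ∈ inversions w := by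
  have hlen := len_mul_add_card_inter (sgen i) w
  rw [map_inversions_sgen, len_sgen] at hlen
  set a := w⁻¹ i.castSucc
  set b := w⁻¹ i.succ
  change len (sgen i * w) < len w ↔ _
  by_cases hab : (a, b) ∈ inversions w
  · have hne : (a, b) ≠ (b, a) := by
      simp [a, b, Fin.castSucc_lt_succ.ne]
    rw [inter_eq_right.2 (pair_subset_inversions_iff.2 hab), card_pair hne] at hlen
    simp only [hab, iff_true]
    omega
  · rw [disjoint_iff_inter_eq_empty.1 (disjoint_inversions_pair_iff.2 hab), card_empty] at hlen
    simp only [hab, iff_false]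
    omega

lemma notMem_desL_iff_lt {w : SG n} {i : Fin n} :
    i ∉ DesL w ↔ w⁻¹ i.castSucc < w⁻¹ i.succ := by
  have hne : w⁻¹ i.castSucc ≠ w⁻¹ i.succ := w⁻¹.injective.ne Fin.castSucc_lt_succ.ne
  rcases hne.lt_or_gt with h | h
  · rw [mem_desL_iff, mem_inversions_of_lt h, Equiv.Perm.coe_inv, Equiv.apply_symm_apply,
      Equiv.apply_symm_apply]
    exact iff_of_true Fin.castSucc_lt_succ.not_gt h
  · rw [mem_desL_iff, mem_inversions_comm, mem_inversions_of_lt h, Equiv.Perm.coe_inv,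
      Equiv.apply_symm_apply, Equiv.apply_symm_apply]
    exact iff_of_false (not_not.2 Fin.castSucc_lt_succ) h.not_gt

lemma inversions_sgen_mul_of_notMem_desL {w : SG n} {i : Fin n} (h : i ∉ DesL w) :
    inversions (sgen i * w) =
      inversions w ∪ {(w⁻¹ i.castSucc, w⁻¹ i.succ), (w⁻¹ i.succ, w⁻¹ i.castSucc)} := by
  rw [inversions_mul, map_inversions_sgen, symmDiff_eq_union]
  exact disjoint_inversions_pair_iff.2 (mem_desL_iff.not.1 h)

end Inversions

/-- For `γ ∈ [σ,ρ]_L` and `i ∉ Des_L(γ)`:  `s_i γ ∈ [σ,ρ]_L` iff `i ∉ Des_L(γ ρ⁻¹ w₀)`. -/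
theorem stmt9 (n : ℕ) (σ ρ γ : SG n) (hγ : leL σ γ ∧ leL γ ρ) (i : Fin n)
    (hi : i ∉ DesL γ) :
    (leL σ (sgen i * γ) ∧ leL (sgen i * γ) ρ) ↔ i ∉ DesL (γ * ρ⁻¹ * w0) := by
  obtain ⟨hσγ, hγρ⟩ := hγ
  rw [leL_iff_inversions_subset] at hσγ hγρ
  have hab := notMem_desL_iff_lt.1 hi
  have hx : ∀ p, (γ * ρ⁻¹ * w0 : SG n)⁻¹ p = (ρ (γ⁻¹ p)).rev := fun _ => rfl
  rw [leL_iff_inversions_subset, leL_iff_inversions_subset, inversions_sgen_mul_of_notMem_desL hi,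
    union_subset_iff, pair_subset_inversions_iff, mem_inversions_of_lt hab, notMem_desL_iff_lt,
    hx, hx, Fin.rev_lt_rev]
  exact ⟨fun h => h.2.2, fun h => ⟨hσγ.trans subset_union_left, hγρ, h⟩⟩
end
end

section
/- Let σ, ρ ∈ S_{m+n} with σ ≤_L ρ, and let J be an m-element subset of [m+n] such that some γ ∈ [σ,ρ]_L satisfies γ^{-1}([1,m]) = J. Then the set {γ ∈ [σ,ρ]_L : γ^{-1}([1,m]) = J} is itself a left weak Bruhat interval [σ_J, ρ^J]_L, where σ_J := perm_{σ(J)} σ and ρ^J := perm^{(w_0ρ)(J)} w_0 ρ; in particular this set has a minimum and a maximum in the left weak Bruhat order. -/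
/-!
Left weak order is inclusion of inversion sets `{(p, q) | p < q, γ q < γ p}`. A permutation `γ`
has `γ⁻¹([1,m]) = J` exactly when every pair `p < q` with `p ∉ J`, `q ∈ J` is an inversion and
no pair with `p ∈ J`, `q ∉ J` is; among such permutations only the pairs inside one block
(`J` or its complement) are free. `σ_J` and `ρ^J` are the permutations of this kind whose
within-block inversions are those of `σ` and of `ρ`. One such `γ₀` in `[σ, ρ]_L` forces
`σ ≤_L σ_J` and `ρ^J ≤_L ρ`, and then the set in question is exactly `[σ_J, ρ^J]_L`.
-/

open scoped Classical

noncomputable section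

/-- `perm_J`: the permutation sending the `k`-th smallest element of `J` to `k` and the
`s`-th smallest element of the complement of `J` to `m + s` (0-indexed). -/
noncomputable def permJdown {N : ℕ} (m : ℕ) (hm : m ≤ N + 1) (J : Finset (Fin (N + 1)))
    (hJ : J.card = m) : SG N :=
  (Equiv.sumCompl (· ∈ J)).symm.trans
    ((Equiv.sumCongr (J.orderIsoOfFin hJ).toEquiv.symm
        ((Equiv.subtypeEquivRight (fun x => (Finset.mem_compl (a := x)).symm)).trans
          (Jᶜ.orderIsoOfFin (by
              rw [Finset.card_compl, hJ, Fintype.card_fin])).toEquiv.symm)).trans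
      (finSumFinEquiv.trans (finCongr (by omega))))

/-- `perm^J`: the permutation sending the `k`-th smallest element of `J` to `m - k + 1` and
the `s`-th smallest element of the complement of `J` to `m + n - s + 1` (here 0-indexed:
each block is reversed). -/
noncomputable def permJup {N : ℕ} (m : ℕ) (hm : m ≤ N + 1) (J : Finset (Fin (N + 1)))
    (hJ : J.card = m) : SG N :=
  (Equiv.sumCompl (· ∈ J)).symm.trans
    ((Equiv.sumCongr ((J.orderIsoOfFin hJ).toEquiv.symm.trans
          (Fin.revPerm : Equiv.Perm (Fin m)))
        (((Equiv.subtypeEquivRight (fun x => (Finset.mem_compl (a := x)).symm)).trans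
          (Jᶜ.orderIsoOfFin (by
              rw [Finset.card_compl, hJ, Fintype.card_fin])).toEquiv.symm).trans
          (Fin.revPerm : Equiv.Perm (Fin (N + 1 - m))))).trans
      (finSumFinEquiv.trans (finCongr (by omega))))

open Finset

section Inversions

variable {n : ℕ}

def disagreements (σ ρ : SG n) : Finset (Fin (n + 1) × Fin (n + 1)) :=
  univ.filter fun p => σ p.1 < σ p.2 ∧ ρ p.2 < ρ p.1

@[simp]
lemma mem_disagreements {σ ρ : SG n} {p : Fin (n + 1) × Fin (n + 1)} :
    p ∈ disagreements σ ρ ↔ σ p.1 < σ p.2 ∧ ρ p.2 < ρ p.1 := by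
  simp [disagreements]

lemma len_eq_card_disagreements (σ : SG n) : len σ = #(disagreements 1 σ) := rfl

lemma card_disagreements_mul_right (σ ρ τ : SG n) :
    #(disagreements (σ * τ) (ρ * τ)) = #(disagreements σ ρ) :=
  card_equiv (Equiv.prodCongr τ τ) (by simp)

lemma len_mul_inv (σ ρ : SG n) : len (ρ * σ⁻¹) = #(disagreements σ ρ) := by
  rw [len_eq_card_disagreements, ← card_disagreements_mul_right _ _ σ, one_mul,
    inv_mul_cancel_right]

lemma leL_iff_len (σ ρ : SG n) : leL σ ρ ↔ len ρ = len σ + len (ρ * σ⁻¹) :=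
  ⟨fun ⟨γ, hρ, h⟩ => by rwa [hρ, mul_inv_cancel_right, ← hρ],
    fun h => ⟨ρ * σ⁻¹, (inv_mul_cancel_right ρ σ).symm, h⟩⟩

/-- Every inversion of `ρ` is an inversion of `σ` or a pair on which `σ` and `ρ` disagree, and
there are `len (ρ * σ⁻¹)` of the latter; so length is additive exactly when this cover is a
disjoint union, i.e. when no inversion of `σ` is lost. -/
lemma leL_iff_forall_lt {σ ρ : SG n} :
    leL σ ρ ↔ ∀ ⦃p q⦄, p < q → σ q < σ p → ρ q < ρ p := by
  have hsub : disagreements 1 σ ⊆ disagreements 1 ρ ↔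
      ∀ ⦃p q⦄, p < q → σ q < σ p → ρ q < ρ p := by
    simp only [subset_iff, mem_disagreements, Equiv.Perm.one_apply, Prod.forall]
    exact ⟨fun h p q hpq hσ => (h p q ⟨hpq, hσ⟩).2, fun h p q hpq => ⟨hpq.1, h hpq.1 hpq.2⟩⟩
  have hcover : disagreements 1 ρ ⊆ disagreements 1 σ ∪ disagreements σ ρ := by
    intro p hp
    simp only [mem_union, mem_disagreements, Equiv.Perm.one_apply] at hp ⊢
    rcases lt_or_gt_of_ne (σ.injective.ne hp.1.ne) with h | h
    · exact Or.inr ⟨h, hp.2⟩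
    · exact Or.inl ⟨hp.1, h⟩
  rw [leL_iff_len, len_mul_inv, len_eq_card_disagreements, len_eq_card_disagreements, ← hsub]
  constructor
  · intro h
    have := eq_of_subset_of_card_le hcover ((card_union_le _ _).trans h.ge)
    exact this ▸ subset_union_left
  · intro h
    have hdisj : Disjoint (disagreements 1 σ) (disagreements σ ρ) := by
      simp only [disjoint_left, mem_disagreements, Equiv.Perm.one_apply]
      exact fun p hp hp' => lt_asymm hp.2 hp'.1
    have hsub' : disagreements σ ρ ⊆ disagreements 1 ρ := by
      intro p hp
      rw [mem_disagreements] at hp ⊢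
      refine ⟨(lt_or_gt_of_ne fun e => hp.1.ne (congrArg σ e)).resolve_right
        fun hgt => lt_asymm hp.2 (hsub.1 h hgt hp.1), hp.2⟩
    rw [← card_union_of_disjoint hdisj,
      le_antisymm (card_le_card hcover) (card_le_card (union_subset h hsub'))]

lemma leL_trans {σ τ ρ : SG n} (h₁ : leL σ τ) (h₂ : leL τ ρ) : leL σ ρ :=
  leL_iff_forall_lt.2 fun _ _ hpq h => leL_iff_forall_lt.1 h₂ hpq (leL_iff_forall_lt.1 h₁ hpq h)

end Inversions

section Blocks

variable {n : ℕ} {J : Finset (Fin (n + 1))}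

lemma val_lt_card_iff_mem {γ : SG n} (H : ∀ p ∈ J, ∀ q ∉ J, γ p < γ q) (x : Fin (n + 1)) :
    (γ x : ℕ) < #J ↔ x ∈ J := by
  constructor
  · intro hx
    by_contra hxJ
    have hsub : J.image γ ⊆ Iio (γ x) := by
      intro v hv
      obtain ⟨p, hp, rfl⟩ := mem_image.1 hv
      exact mem_Iio.2 (H p hp x hxJ)
    have := card_le_card hsub
    rw [card_image_of_injective _ γ.injective, Fin.card_Iio] at this
    omega
  · intro hx
    have hsub : Iic (γ x) ⊆ J.image γ := by
      intro v hv
      refine mem_image.2 ⟨γ.symm v, by_contra fun hv' => ?_, γ.apply_symm_apply v⟩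
      have := H x hx _ hv'
      rw [Equiv.apply_symm_apply] at this
      exact (mem_Iic.1 hv).not_gt this
    have := card_le_card hsub
    rw [card_image_of_injective _ γ.injective, Fin.card_Iic] at this
    omega

lemma lt_of_mem_of_notMem {γ : SG n} (hγ : ∀ x, (γ x : ℕ) < #J ↔ x ∈ J) {p q : Fin (n + 1)}
    (hp : p ∈ J) (hq : q ∉ J) : γ p < γ q := by
  have := (hγ p).2 hp
  have := (hγ q).not.2 hq
  rw [Fin.lt_def]
  omega

lemma val_lt_card_iff_mem_of_leL_of_leL {a b γ : SG n} (ha : ∀ x, (a x : ℕ) < #J ↔ x ∈ J)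
    (hb : ∀ x, (b x : ℕ) < #J ↔ x ∈ J) (h₁ : leL a γ) (h₂ : leL γ b) (x : Fin (n + 1)) :
    (γ x : ℕ) < #J ↔ x ∈ J := by
  refine val_lt_card_iff_mem (fun p hp q hq => ?_) x
  rcases lt_or_gt_of_ne (ne_of_mem_of_not_mem hp hq) with hpq | hqp
  · refine lt_of_not_ge fun h => (lt_of_mem_of_notMem hb hp hq).not_gt ?_
    exact leL_iff_forall_lt.1 h₂ hpq (h.lt_of_ne (γ.injective.ne hpq.ne'))
  · exact leL_iff_forall_lt.1 h₁ hqp (lt_of_mem_of_notMem ha hp hq)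

lemma leL_iff_forall_lt_of_mem_iff {a b : SG n} (ha : ∀ x, (a x : ℕ) < #J ↔ x ∈ J)
    (hb : ∀ x, (b x : ℕ) < #J ↔ x ∈ J) :
    leL a b ↔ ∀ ⦃p q⦄, p < q → (p ∈ J ↔ q ∈ J) → a q < a p → b q < b p := by
  rw [leL_iff_forall_lt]
  refine ⟨fun h p q hpq _ => h hpq, fun h p q hpq hab => ?_⟩
  by_cases hp : p ∈ J <;> by_cases hq : q ∈ J
  · exact h hpq (iff_of_true hp hq) hab
  · exact absurd hab (lt_of_mem_of_notMem ha hp hq).not_gt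
  · exact lt_of_mem_of_notMem hb hq hp
  · exact h hpq (iff_of_false hp hq) hab

lemma leL_of_agree_of_leL {σ τ γ : SG n} (hτ : ∀ x, (τ x : ℕ) < #J ↔ x ∈ J)
    (hγ : ∀ x, (γ x : ℕ) < #J ↔ x ∈ J)
    (hτσ : ∀ ⦃p q⦄, (p ∈ J ↔ q ∈ J) → (τ q < τ p ↔ σ q < σ p)) (hσγ : leL σ γ) :
    leL σ τ := by
  rw [leL_iff_forall_lt] at hσγ ⊢
  intro p q hpq hσ
  by_cases hp : p ∈ J <;> by_cases hq : q ∈ J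
  · exact (hτσ (iff_of_true hp hq)).2 hσ
  · exact absurd (hσγ hpq hσ) (lt_of_mem_of_notMem hγ hp hq).not_gt
  · exact lt_of_mem_of_notMem hτ hq hp
  · exact (hτσ (iff_of_false hp hq)).2 hσ

lemma leL_of_leL_of_agree {ρ τ γ : SG n} (hτ : ∀ x, (τ x : ℕ) < #J ↔ x ∈ J)
    (hγ : ∀ x, (γ x : ℕ) < #J ↔ x ∈ J)
    (hτρ : ∀ ⦃p q⦄, (p ∈ J ↔ q ∈ J) → (τ q < τ p ↔ ρ q < ρ p)) (hγρ : leL γ ρ) :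
    leL τ ρ := by
  rw [leL_iff_forall_lt] at hγρ ⊢
  intro p q hpq hτ'
  by_cases hp : p ∈ J <;> by_cases hq : q ∈ J
  · exact (hτρ (iff_of_true hp hq)).1 hτ'
  · exact absurd hτ' (lt_of_mem_of_notMem hτ hp hq).not_gt
  · exact hγρ hpq (lt_of_mem_of_notMem hγ hq hp)
  · exact (hτρ (iff_of_false hp hq)).1 hτ'

end Blocks

section PermJ

variable {N m : ℕ} (hm : m ≤ N + 1) {K : Finset (Fin (N + 1))} (hK : #K = m)

lemma permJdown_val_of_mem {x : Fin (N + 1)} (hx : x ∈ K) :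
    (permJdown m hm K hK x : ℕ) = (K.orderIsoOfFin hK).symm ⟨x, hx⟩ := by
  simp [permJdown, Equiv.sumCompl_symm_apply_of_pos (p := (· ∈ K)) hx]

lemma permJdown_val_of_notMem {x : Fin (N + 1)} (hx : x ∉ K) :
    (permJdown m hm K hK x : ℕ) =
      m + (Kᶜ.orderIsoOfFin (by rw [card_compl, hK, Fintype.card_fin])).symm
        ⟨x, mem_compl.2 hx⟩ := by
  simp [permJdown, Equiv.sumCompl_symm_apply_of_neg (p := (· ∈ K)) hx,
    Equiv.subtypeEquivRight_apply]

lemma permJdown_val_lt_iff (x : Fin (N + 1)) : (permJdown m hm K hK x : ℕ) < m ↔ x ∈ K := by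
  by_cases hx : x ∈ K
  · simp only [hx, permJdown_val_of_mem hm hK hx, Fin.is_lt]
  · simp only [hx, iff_false, not_lt, permJdown_val_of_notMem hm hK hx]
    omega

lemma permJdown_lt_permJdown_iff {x y : Fin (N + 1)} (hxy : x ∈ K ↔ y ∈ K) :
    permJdown m hm K hK x < permJdown m hm K hK y ↔ x < y := by
  by_cases hx : x ∈ K
  · rw [Fin.lt_def, permJdown_val_of_mem hm hK hx, permJdown_val_of_mem hm hK (hxy.1 hx),
      ← Fin.lt_def, OrderIso.lt_iff_lt, Subtype.mk_lt_mk]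
  · rw [Fin.lt_def, permJdown_val_of_notMem hm hK hx,
      permJdown_val_of_notMem hm hK (hxy.not.1 hx), Nat.add_lt_add_iff_left, ← Fin.lt_def,
      OrderIso.lt_iff_lt, Subtype.mk_lt_mk]

lemma permJup_val_of_mem {x : Fin (N + 1)} (hx : x ∈ K) :
    (permJup m hm K hK x : ℕ) = ((K.orderIsoOfFin hK).symm ⟨x, hx⟩).rev := by
  simp [permJup, Equiv.sumCompl_symm_apply_of_pos (p := (· ∈ K)) hx]

lemma permJup_val_of_notMem {x : Fin (N + 1)} (hx : x ∉ K) :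
    (permJup m hm K hK x : ℕ) =
      m + ((Kᶜ.orderIsoOfFin (by rw [card_compl, hK, Fintype.card_fin])).symm
        ⟨x, mem_compl.2 hx⟩).rev := by
  simp [permJup, Equiv.sumCompl_symm_apply_of_neg (p := (· ∈ K)) hx,
    Equiv.subtypeEquivRight_apply]

lemma permJup_val_lt_iff (x : Fin (N + 1)) : (permJup m hm K hK x : ℕ) < m ↔ x ∈ K := by
  by_cases hx : x ∈ K
  · simp only [hx, permJup_val_of_mem hm hK hx, Fin.is_lt]
  · simp only [hx, iff_false, not_lt, permJup_val_of_notMem hm hK hx]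
    omega

lemma permJup_lt_permJup_iff {x y : Fin (N + 1)} (hxy : x ∈ K ↔ y ∈ K) :
    permJup m hm K hK x < permJup m hm K hK y ↔ y < x := by
  by_cases hx : x ∈ K
  · rw [Fin.lt_def, permJup_val_of_mem hm hK hx, permJup_val_of_mem hm hK (hxy.1 hx),
      ← Fin.lt_def, Fin.rev_lt_rev, OrderIso.lt_iff_lt, Subtype.mk_lt_mk]
  · rw [Fin.lt_def, permJup_val_of_notMem hm hK hx, permJup_val_of_notMem hm hK (hxy.not.1 hx),
      Nat.add_lt_add_iff_left, ← Fin.lt_def, Fin.rev_lt_rev, OrderIso.lt_iff_lt,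
      Subtype.mk_lt_mk]

end PermJ

/-- For `σ ≤_L ρ` and an `m`-subset `J` realized as `γ⁻¹([1,m])` for some `γ ∈ [σ,ρ]_L`,
the set `{γ ∈ [σ,ρ]_L : γ⁻¹([1,m]) = J}` is the left weak Bruhat interval
`[σ_J, ρ^J]_L` with `σ_J = perm_{σ(J)} σ` and `ρ^J = perm^{(w₀ρ)(J)} w₀ρ`. -/
theorem stmt14 (N m : ℕ) (hm : m ≤ N + 1) (σ ρ : SG N)
    (J : Finset (Fin (N + 1))) (hJ : J.card = m)
    (hex : ∃ γ : SG N, (leL σ γ ∧ leL γ ρ) ∧ ∀ x : Fin (N + 1), ((γ x : ℕ) < m ↔ x ∈ J)) :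
    ∀ γ : SG N,
      ((leL σ γ ∧ leL γ ρ) ∧ ∀ x : Fin (N + 1), ((γ x : ℕ) < m ↔ x ∈ J)) ↔
      (leL (permJdown m hm (J.image ⇑σ)
              (by rw [Finset.card_image_of_injective J σ.injective, hJ]) * σ) γ ∧
       leL γ (permJup m hm (J.image ⇑(w0 * ρ : SG N))
              (by rw [Finset.card_image_of_injective J (w0 * ρ : SG N).injective, hJ]) *
            (w0 * ρ))) := by
  subst hJ
  obtain ⟨γ₀, ⟨hσγ₀, hγ₀ρ⟩, hγ₀⟩ := hex
  set σJ := permJdown #J hm (J.image σ) (by rw [card_image_of_injective J σ.injective]) * σ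
  set ρJ := permJup #J hm (J.image (w0 * ρ : SG N))
    (by rw [card_image_of_injective J (w0 * ρ : SG N).injective]) * (w0 * ρ)
  have hσJ (x : Fin (N + 1)) : (σJ x : ℕ) < #J ↔ x ∈ J :=
    (permJdown_val_lt_iff hm _ _).trans σ.injective.mem_finset_image
  have hρJ (x : Fin (N + 1)) : (ρJ x : ℕ) < #J ↔ x ∈ J :=
    (permJup_val_lt_iff hm _ _).trans (w0 * ρ).injective.mem_finset_image
  have hσJσ ⦃p q : Fin (N + 1)⦄ (hpq : p ∈ J ↔ q ∈ J) : σJ q < σJ p ↔ σ q < σ p :=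
    permJdown_lt_permJdown_iff hm _ (by simp only [σ.injective.mem_finset_image, hpq])
  have hρJρ ⦃p q : Fin (N + 1)⦄ (hpq : p ∈ J ↔ q ∈ J) : ρJ q < ρJ p ↔ ρ q < ρ p :=
    (permJup_lt_permJup_iff hm _ (by simp only [(w0 * ρ).injective.mem_finset_image, hpq])).trans
      Fin.rev_lt_rev
  intro γ
  constructor
  · rintro ⟨⟨hσγ, hγρ⟩, hγ⟩
    exact ⟨(leL_iff_forall_lt_of_mem_iff hσJ hγ).2 fun p q hpq hJ h =>
        leL_iff_forall_lt.1 hσγ hpq ((hσJσ hJ).1 h),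
      (leL_iff_forall_lt_of_mem_iff hγ hρJ).2 fun p q hpq hJ h =>
        (hρJρ hJ).2 (leL_iff_forall_lt.1 hγρ hpq h)⟩
  · rintro ⟨h₁, h₂⟩
    exact ⟨⟨leL_trans (leL_of_agree_of_leL hσJ hγ₀ hσJσ hσγ₀) h₁,
      leL_trans h₂ (leL_of_leL_of_agree hρJ hγ₀ hρJρ hγ₀ρ)⟩,
      val_lt_card_iff_mem_of_leL_of_leL hσJ hρJ h₁ h₂⟩
end
end

section
/- For σ, ρ ∈ S_n, the map γ ↦ w_0 γ w_0 induces an isomorphism of H_n(0)-modules from the φ-twist of B(σ,ρ) onto B(w_0σw_0, w_0ρw_0), where φ is the involutive automorphism of H_n(0) with φ(π_i) = π_{n−i}. -/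
open scoped Classical

noncomputable section

/-- The underlying map of the `φ`-twist isomorphism, sending a basis element `γ` of
`B(σ,ρ)` to `w₀ γ w₀` (a basis element of `B(σ^{w₀}, ρ^{w₀})`). -/
noncomputable def phiF {n : ℕ} (σ ρ : SG n) :
    (Itv σ ρ →₀ ℂ) →ₗ[ℂ] (Itv (w0 * σ * w0) (w0 * ρ * w0) →₀ ℂ) :=
  Finsupp.lift _ ℂ _ (fun γ : Itv σ ρ =>
    if h : leL (w0 * σ * w0) (w0 * γ.1 * w0) ∧ leL (w0 * γ.1 * w0) (w0 * ρ * w0) then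
      Finsupp.single ⟨w0 * γ.1 * w0, h⟩ 1
    else 0)

/-! Conjugation by `w₀` is a length-preserving automorphism of `S_{n+1}` sending `s_{rev i}` to
`s_i`. Any length-preserving automorphism `f` preserves the left weak order and moves left
descents along with the generators, so it maps `[σ,ρ]_L` bijectively onto `[f σ, f ρ]_L` and
carries the action of `π_j` on `B(σ,ρ)` to that of `π_i` on `B(f σ, f ρ)` whenever
`f s_j = s_i`. -/

namespace SG

variable {n : ℕ}

lemma leL_map_of_len_map (f : SG n →* SG n) (hf : ∀ g, len (f g) = len g) {σ γ : SG n}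
    (h : leL σ γ) : leL (f σ) (f γ) := by
  obtain ⟨δ, rfl, hlen⟩ := h
  exact ⟨f δ, map_mul f δ σ, by simp only [hf, hlen]⟩

lemma leL_map_iff (f : SG n ≃* SG n) (hf : ∀ g, len (f g) = len g) {σ γ : SG n} :
    leL (f σ) (f γ) ↔ leL σ γ := by
  refine ⟨fun h => ?_, leL_map_of_len_map f.toMonoidHom hf⟩
  have hf' : ∀ g, len (f.symm g) = len g := fun g => by rw [← hf, MulEquiv.apply_symm_apply]
  simpa using leL_map_of_len_map f.symm.toMonoidHom hf' h

lemma mem_DesL_map_iff (f : SG n ≃* SG n) (hf : ∀ g, len (f g) = len g) {i j : Fin n}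
    (hij : f (sgen j) = sgen i) (γ : SG n) : i ∈ DesL (f γ) ↔ j ∈ DesL γ := by
  simp only [DesL, Set.mem_ofPred_eq, ← hij, ← map_mul, hf]

def itvMap (f : SG n ≃* SG n) (hf : ∀ g, len (f g) = len g) (σ ρ : SG n) :
    Itv σ ρ ≃ Itv (f σ) (f ρ) where
  toFun γ := ⟨f γ, (leL_map_iff f hf).2 γ.2.1, (leL_map_iff f hf).2 γ.2.2⟩
  invFun δ := ⟨f.symm δ, (leL_map_iff f hf).1 (by simpa using δ.2.1),
    (leL_map_iff f hf).1 (by simpa using δ.2.2)⟩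
  left_inv γ := Subtype.ext (f.symm_apply_apply γ)
  right_inv δ := Subtype.ext (f.apply_symm_apply δ)

@[simp]
lemma coe_itvMap (f : SG n ≃* SG n) (hf : ∀ g, len (f g) = len g) {σ ρ : SG n}
    (γ : Itv σ ρ) : (itvMap f hf σ ρ γ : SG n) = f γ :=
  rfl

lemma bpiFun_of_mem_DesL {σ ρ : SG n} {i : Fin n} {γ : Itv σ ρ} (h : i ∈ DesL γ.1) :
    bpiFun σ ρ i γ = Finsupp.single γ 1 :=
  if_pos h

lemma bpiFun_of_mem_Itv {σ ρ : SG n} {i : Fin n} {γ : Itv σ ρ} (hdes : i ∉ DesL γ.1)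
    (hmem : leL σ (sgen i * γ.1) ∧ leL (sgen i * γ.1) ρ) :
    bpiFun σ ρ i γ = Finsupp.single ⟨sgen i * γ.1, hmem⟩ 1 := by
  rw [bpiFun, if_neg hdes, dif_pos hmem]

lemma bpiFun_of_notMem_Itv {σ ρ : SG n} {i : Fin n} {γ : Itv σ ρ} (hdes : i ∉ DesL γ.1)
    (hmem : ¬(leL σ (sgen i * γ.1) ∧ leL (sgen i * γ.1) ρ)) : bpiFun σ ρ i γ = 0 := by
  rw [bpiFun, if_neg hdes, dif_neg hmem]

lemma domLCongr_itvMap_bpiFun (f : SG n ≃* SG n) (hf : ∀ g, len (f g) = len g) {i j : Fin n}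
    (hij : f (sgen j) = sgen i) (σ ρ : SG n) (γ : Itv σ ρ) :
    Finsupp.domLCongr (R := ℂ) (itvMap f hf σ ρ) (bpiFun σ ρ j γ) =
      bpiFun (f σ) (f ρ) i (itvMap f hf σ ρ γ) := by
  have hdes_iff : i ∈ DesL (itvMap f hf σ ρ γ).1 ↔ j ∈ DesL γ.1 :=
    mem_DesL_map_iff f hf hij γ
  have hmul : sgen i * (itvMap f hf σ ρ γ).1 = f (sgen j * γ) := by
    rw [coe_itvMap, map_mul, hij]
  have hmem_iff : (leL (f σ) (sgen i * (itvMap f hf σ ρ γ).1) ∧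
      leL (sgen i * (itvMap f hf σ ρ γ).1) (f ρ)) ↔
      (leL σ (sgen j * γ.1) ∧ leL (sgen j * γ.1) ρ) := by
    rw [hmul, leL_map_iff f hf, leL_map_iff f hf]
  by_cases hdes : j ∈ DesL γ.1
  · rw [bpiFun_of_mem_DesL hdes, bpiFun_of_mem_DesL (hdes_iff.2 hdes), Finsupp.domLCongr_single]
  have hdes' := hdes_iff.not.2 hdes
  by_cases hmem : leL σ (sgen j * γ.1) ∧ leL (sgen j * γ.1) ρ
  · rw [bpiFun_of_mem_Itv hdes hmem, bpiFun_of_mem_Itv hdes' (hmem_iff.2 hmem),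
      Finsupp.domLCongr_single]
    exact congrArg₂ _ (Subtype.ext hmul.symm) rfl
  · rw [bpiFun_of_notMem_Itv hdes hmem, bpiFun_of_notMem_Itv hdes' (hmem_iff.not.2 hmem),
      map_zero]

lemma domLCongr_itvMap_bpi (f : SG n ≃* SG n) (hf : ∀ g, len (f g) = len g) {i j : Fin n}
    (hij : f (sgen j) = sgen i) (σ ρ : SG n) (v : Itv σ ρ →₀ ℂ) :
    Finsupp.domLCongr (R := ℂ) (itvMap f hf σ ρ) (bpi σ ρ j v) =
      bpi (f σ) (f ρ) i (Finsupp.domLCongr (R := ℂ) (itvMap f hf σ ρ) v) := by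
  induction v using Finsupp.induction_linear with
  | zero => simp only [map_zero]
  | add v w hv hw => simp only [map_add, hv, hw]
  | single γ c =>
    simp only [bpi, Finsupp.domLCongr_single, Finsupp.lift_apply, Finsupp.sum_single_index,
      zero_smul, map_smul, domLCongr_itvMap_bpiFun f hf hij]

lemma w0_apply (x : Fin (n + 1)) : (w0 : SG n) x = x.rev := rfl

lemma w0_mul_w0 : (w0 : SG n) * w0 = 1 :=
  Equiv.ext Fin.rev_rev

lemma w0_mul_w0_mul (g : SG n) : w0 * (w0 * g) = g := by
  rw [← mul_assoc, w0_mul_w0, one_mul]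

lemma w0_inv : (w0 : SG n)⁻¹ = w0 :=
  inv_eq_of_mul_eq_one_left w0_mul_w0

def conjW0 : SG n ≃* SG n where
  toFun g := w0 * g * w0
  invFun g := w0 * g * w0
  left_inv g := by simp only [mul_assoc, w0_mul_w0, mul_one, w0_mul_w0_mul]
  right_inv g := by simp only [mul_assoc, w0_mul_w0, mul_one, w0_mul_w0_mul]
  map_mul' g h := by simp only [← mul_assoc, mul_assoc _ w0 w0, w0_mul_w0, mul_one]

lemma conjW0_apply (g : SG n) : conjW0 g = w0 * g * w0 := rfl

lemma len_conjW0 (g : SG n) : len (conjW0 g) = len g := by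
  refine Finset.card_bij' (fun p _ => (p.2.rev, p.1.rev)) (fun q _ => (q.2.rev, q.1.rev))
    ?_ ?_ (fun p _ => by simp) (fun q _ => by simp)
  all_goals
    intro p hp
    simp only [Finset.mem_filter, Finset.mem_univ, true_and, conjW0_apply,
      Equiv.Perm.mul_apply, w0_apply, Fin.rev_rev, Fin.rev_lt_rev] at hp ⊢
    exact ⟨hp.1, hp.2⟩

lemma conjW0_sgen_rev (i : Fin n) : conjW0 (sgen i.rev) = sgen i := by
  calc conjW0 (sgen i.rev) = w0 * Equiv.swap i.rev.castSucc i.rev.succ * w0⁻¹ := by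
        rw [w0_inv, conjW0_apply, sgen]
    _ = Equiv.swap i.succ i.castSucc := by
        rw [← Equiv.swap_apply_apply, w0_apply, w0_apply, Fin.rev_castSucc, Fin.rev_succ,
          Fin.rev_rev]
    _ = sgen i := Equiv.swap_comm _ _

lemma phiF_eq_domLCongr (σ ρ : SG n) :
    phiF σ ρ = (Finsupp.domLCongr (R := ℂ) (itvMap conjW0 len_conjW0 σ ρ)).toLinearMap := by
  refine Finsupp.lhom_ext fun γ c => ?_
  have hγ : leL (w0 * σ * w0) (w0 * γ.1 * w0) ∧ leL (w0 * γ.1 * w0) (w0 * ρ * w0) :=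
    (itvMap conjW0 len_conjW0 σ ρ γ).2
  simp only [phiF, Finsupp.lift_apply, Finsupp.sum_single_index, zero_smul, dif_pos hγ,
    Finsupp.smul_single_one]
  exact (Finsupp.domLCongr_single (R := ℂ) (itvMap conjW0 len_conjW0 σ ρ) γ c).symm

end SG

/-- In the paper's indexing `φ(π_{i+1}) = π_{n+1-(i+1)}`, which is `i ↦ i.rev` on `Fin n`. -/
theorem stmt16 (n : ℕ) (σ ρ : SG n) :
    Function.Bijective (phiF σ ρ) ∧
    ∀ (i : Fin n) (v : Itv σ ρ →₀ ℂ),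
      phiF σ ρ (bpi σ ρ i.rev v) = bpi (w0 * σ * w0) (w0 * ρ * w0) i (phiF σ ρ v) := by
  rw [SG.phiF_eq_domLCongr]
  exact ⟨(Finsupp.domLCongr _).bijective, fun i =>
    SG.domLCongr_itvMap_bpi SG.conjW0 SG.len_conjW0 (SG.conjW0_sgen_rev i) σ ρ⟩

end
end

section
/- For σ, ρ ∈ S_n, the θ-twist of B(σ,ρ) is isomorphic as an H_n(0)-module to the module B̄(σ,ρ), via the map γ ↦ (−1)^{ℓ(γσ^{-1})} γ, where θ is the involutive automorphism of H_n(0) with θ(π_i) = −π̄_i = 1 − π_i. -/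
open scoped Classical

noncomputable section

/-- The underlying map of the `θ`-twist isomorphism, sending a basis element `γ` of
`B(σ,ρ)` to `(-1)^{ℓ(γσ⁻¹)} γ`. -/
noncomputable def thetaF {n : ℕ} (σ ρ : SG n) :
    (Itv σ ρ →₀ ℂ) →ₗ[ℂ] (Itv σ ρ →₀ ℂ) :=
  Finsupp.lift _ ℂ _ (fun γ : Itv σ ρ =>
    ((-1 : ℂ) ^ len (γ.1 * σ⁻¹)) • Finsupp.single γ 1)

open Finsupp

/- The sign `(-1)^{ℓ(γσ⁻¹)}` flips along every edge `γ → s_i γ` of the interval, and an edge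
exists exactly where `π_i` moves `γ` up. On a basis element `γ` the twisted operator `1 - π_i`
is therefore `0` at a left descent, `γ - s_i γ` along an edge and `γ` otherwise, which the
sign change turns into `1 + π̄_i` acting on `±γ`. -/

lemma Equiv.Perm.signAux_eq_neg_one_pow_len {n : ℕ} (f : SG n) :
    Equiv.Perm.signAux f = (-1) ^ len f := by
  unfold Equiv.Perm.signAux len
  rw [Finset.prod_ite, Finset.prod_const, Finset.prod_const, one_pow, mul_one]
  congr 1
  refine Finset.card_bij (fun x _ => (x.2, x.1)) ?_ ?_ ?_
  · rintro ⟨a, b⟩ hab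
    simp only [Finset.mem_filter, Equiv.Perm.mem_finPairsLT] at hab ⊢
    exact ⟨Finset.mem_univ _, hab.1,
      lt_of_le_of_ne hab.2 fun he => (f.injective he ▸ hab.1).ne rfl⟩
  · rintro ⟨a, b⟩ - ⟨c, d⟩ - h
    simp only [Prod.mk.injEq] at h
    obtain ⟨rfl, rfl⟩ := h
    rfl
  · rintro ⟨a, b⟩ hab
    simp only [Finset.mem_filter, Finset.mem_univ, true_and] at hab
    exact ⟨⟨b, a⟩, by simpa [Equiv.Perm.mem_finPairsLT] using ⟨hab.1, hab.2.le⟩, rfl⟩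

lemma neg_one_pow_len_sgen_mul {R : Type*} [Ring R] {n : ℕ} (i : Fin n) (τ : SG n) :
    (-1 : R) ^ len (sgen i * τ) = -(-1 : R) ^ len τ := by
  have hsign : Equiv.Perm.signAux (sgen i * τ) = -Equiv.Perm.signAux τ := by
    rw [Equiv.Perm.signAux_mul, sgen, Equiv.Perm.signAux_swap Fin.castSucc_lt_succ.ne,
      neg_one_mul]
  rw [Equiv.Perm.signAux_eq_neg_one_pow_len, Equiv.Perm.signAux_eq_neg_one_pow_len] at hsign
  simpa using congrArg (fun u : ℤˣ => ((u : ℤ) : R)) hsign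

lemma Finsupp.lift_apply_single {R M α : Type*} [Semiring R] [AddCommMonoid M] [Module R M]
    (f : α → M) (a : α) (b : R) : Finsupp.lift M R α f (single a b) = b • f a := by
  simp [Finsupp.lift_apply, Finsupp.sum_single_index]

section Twist

variable {n : ℕ} (σ ρ : SG n)

lemma thetaF_single (γ : Itv σ ρ) (b : ℂ) :
    thetaF σ ρ (single γ b) = single γ ((-1) ^ len (γ.1 * σ⁻¹) * b) := by
  rw [thetaF, lift_apply_single, smul_single, smul_eq_mul, mul_one, smul_single, smul_eq_mul,
    mul_comm]

lemma thetaF_involutive : Function.Involutive (thetaF σ ρ) := by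
  intro v
  induction v using Finsupp.induction_linear with
  | zero => simp
  | add f g hf hg => rw [map_add, map_add, hf, hg]
  | single γ b => rw [thetaF_single, thetaF_single, ← mul_assoc, ← pow_add,
      Even.neg_one_pow ⟨_, rfl⟩, one_mul]

lemma thetaF_single_sub_bpi (i : Fin n) (γ : Itv σ ρ) :
    thetaF σ ρ (single γ 1 - bpi σ ρ i (single γ 1)) =
      thetaF σ ρ (single γ 1) + bbar σ ρ i (thetaF σ ρ (single γ 1)) := by
  have hθ (δ : Itv σ ρ) :
      thetaF σ ρ (single δ 1) = (-1 : ℂ) ^ len (δ.1 * σ⁻¹) • single δ 1 := by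
    rw [thetaF_single, mul_one, smul_single_one]
  rw [hθ, map_smul, bpi, bbar, lift_apply_single, lift_apply_single, one_smul, one_smul]
  unfold bpiFun bbarFun
  split_ifs with hdes hedge
  · rw [sub_self, map_zero, smul_neg, add_neg_cancel]
  · have hsign : (-1 : ℂ) ^ len ((⟨sgen i * γ.1, hedge⟩ : Itv σ ρ).1 * σ⁻¹) =
        -(-1) ^ len (γ.1 * σ⁻¹) := by
      rw [mul_assoc, neg_one_pow_len_sgen_mul]
    rw [map_sub, hθ, hθ, hsign, neg_smul, sub_neg_eq_add]
  · rw [sub_zero, hθ, smul_zero, add_zero]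

lemma thetaF_comp_sub_bpi (i : Fin n) :
    thetaF σ ρ ∘ₗ (LinearMap.id - bpi σ ρ i) = (LinearMap.id + bbar σ ρ i) ∘ₗ thetaF σ ρ :=
  lhom_ext' fun γ => LinearMap.ext_ring (by simpa using thetaF_single_sub_bpi σ ρ i γ)

end Twist

/-- The `θ`-twisted action of `π_i` is `v ↦ v - 𝛑_i v`, and `π_i = 1 + π̄_i` acts on `B̄(σ,ρ)` by
`w ↦ w + π̄_i ⋆ w`. -/
theorem stmt17 (n : ℕ) (σ ρ : SG n) :
    Function.Bijective (thetaF σ ρ) ∧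
    ∀ (i : Fin n) (v : Itv σ ρ →₀ ℂ),
      thetaF σ ρ (v - bpi σ ρ i v) = thetaF σ ρ v + bbar σ ρ i (thetaF σ ρ v) :=
  ⟨(thetaF_involutive σ ρ).bijective, fun i v => by
    simpa using LinearMap.congr_fun (thetaF_comp_sub_bpi σ ρ i) v⟩
end
end

section
/- For σ, ρ ∈ S_n, the χ-twist (dual twisted by the anti-automorphism χ with χ(π_i) = π_i) of B(σ,ρ) is isomorphic as an H_n(0)-module to B̄(ρw_0, σw_0), via the map sending the dual basis vector γ* to γw_0. -/
/-!
Since `ℓ(γ w₀) = ℓ(w₀) - ℓ(γ)`, right multiplication by `w₀` reverses the left weak order and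
complements left descent sets, so `γ ↦ γ w₀` maps `[σ,ρ]_L` bijectively onto `[ρw₀, σw₀]_L`, and
`γ* ↦ γ w₀` is a linear isomorphism. Testing the module identity on the dual basis reduces it to
an identity of matrix entries: the coefficient of `γ` in `π_i β` equals the coefficient of `β w₀`
in `(1 + π̄_i)(γ w₀)`. This is checked by cases on whether `i` is a left descent of `β` and of `γ`,
using that `s_i` exchanges descents and non-descents.
-/

open scoped Classical

noncomputable section

/-- The underlying map of the `χ`-twist isomorphism, sending the dual basis element `γ*` of
`B(σ,ρ)*` to the basis element `γ w₀` of `B̄(ρw₀, σw₀)`. -/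
noncomputable def chiF {n : ℕ} (σ ρ : SG n) :
    Module.Dual ℂ (Itv σ ρ →₀ ℂ) →ₗ[ℂ] (Itv (ρ * w0) (σ * w0) →₀ ℂ) where
  toFun δ := ∑ γ : Itv σ ρ, δ (Finsupp.single γ 1) •
    (if h : leL (ρ * w0) (γ.1 * w0) ∧ leL (γ.1 * w0) (σ * w0) then
      Finsupp.single (⟨γ.1 * w0, h⟩ : Itv (ρ * w0) (σ * w0)) (1 : ℂ)
    else 0)
  map_add' a b := by
    rw [← Finset.sum_add_distrib]
    refine Finset.sum_congr rfl fun γ _ => ?_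
    simp only [LinearMap.add_apply, add_smul]
  map_smul' c a := by
    rw [RingHom.id_apply, Finset.smul_sum]
    refine Finset.sum_congr rfl fun γ _ => ?_
    simp only [LinearMap.smul_apply, smul_smul, smul_eq_mul]

open Finset

lemma card_filter_eq_add_one_or_add_one_eq {α : Type*} [Fintype α] [DecidableEq α]
    {P Q : α → Prop} [DecidablePred P] [DecidablePred Q] (a : α)
    (hne : ∀ x ≠ a, P x ↔ Q x) (ha : P a ↔ ¬ Q a) :
    #(univ.filter P) = #(univ.filter Q) + 1 ∨ #(univ.filter P) + 1 = #(univ.filter Q) := by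
  rw [card_filter, card_filter, ← add_sum_erase _ _ (mem_univ a),
    ← add_sum_erase _ _ (mem_univ a),
    sum_congr rfl fun x hx => if_congr (hne x (ne_of_mem_erase hx)) rfl rfl]
  by_cases hQ : Q a <;> simp [hQ, ha.mpr, ha.not_left.mpr] <;> omega

lemma dite_single_apply {α M : Type*} [Zero M] {P : α → Prop} {p : Prop} [Decidable p] {x : α}
    (hx : p → P x) (c : M) (y : Subtype P) :
    (if h : p then Finsupp.single (⟨x, hx h⟩ : Subtype P) c else 0) y =
      if p ∧ x = y.1 then c else 0 := by
  split_ifs <;> simp_all [Subtype.ext_iff]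

section WeakOrder

variable {n : ℕ}

lemma sgen_apply_lt_sgen_apply_iff (i : Fin n) {a b : Fin (n + 1)}
    (h₁ : ¬(a = i.castSucc ∧ b = i.succ)) (h₂ : ¬(a = i.succ ∧ b = i.castSucc)) :
    sgen i a < sgen i b ↔ a < b := by
  simp only [sgen, Equiv.swap_apply_def]
  split_ifs <;> simp only [Fin.lt_def, Fin.ext_iff, Fin.val_succ, Fin.val_castSucc] at * <;> omega

lemma sgen_mul_sgen_mul (i : Fin n) (γ : SG n) : sgen i * (sgen i * γ) = γ := by
  rw [← mul_assoc, sgen, Equiv.swap_mul_self, one_mul]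

lemma len_sgen_mul (i : Fin n) (γ : SG n) :
    len (sgen i * γ) = len γ + 1 ∨ len (sgen i * γ) + 1 = len γ := by
  -- `u` and `v` are the positions of the values `i` and `i + 1`; `(min u v, max u v)` is the
  -- only pair whose inversion status `s_i` changes.
  set u := γ⁻¹ i.castSucc
  set v := γ⁻¹ i.succ
  have huv : u ≠ v := by simp [u, v, Fin.castSucc_lt_succ.ne]
  have hu : γ u = i.castSucc := γ.apply_symm_apply _
  have hv : γ v = i.succ := γ.apply_symm_apply _
  refine card_filter_eq_add_one_or_add_one_eq (min u v, max u v) (fun p hp => ?_) ?_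
  · rcases p with ⟨a, b⟩
    refine and_congr_right fun hab => sgen_apply_lt_sgen_apply_iff i ?_ ?_ <;>
      rintro ⟨hb, ha⟩ <;> apply hp
    · obtain rfl : b = u := by simp [u, ← hb]
      obtain rfl : a = v := by simp [v, ← ha]
      simp [min_eq_right hab.le, max_eq_left hab.le]
    · obtain rfl : b = v := by simp [v, ← hb]
      obtain rfl : a = u := by simp [u, ← ha]
      simp [min_eq_left hab.le, max_eq_right hab.le]
  · rcases huv.lt_or_gt with h | h
    · rw [min_eq_left h.le, max_eq_right h.le]
      simp [hu, hv, h, sgen, Fin.castSucc_lt_succ.le]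
    · rw [min_eq_right h.le, max_eq_left h.le]
      simp [hu, hv, h, sgen, Fin.castSucc_lt_succ.le]

lemma w0_apply (a : Fin (n + 1)) : (w0 : SG n) a = a.rev := rfl

lemma mul_w0_mul_w0 (γ : SG n) : γ * w0 * w0 = γ := by
  ext a
  simp [w0_apply]

lemma len_mul_w0_add_len (φ : SG n) : len (φ * w0) + len φ = len (w0 : SG n) := by
  -- each pair `p.1 < p.2` is an inversion of exactly one of `φ` and `φ * w0`
  have key : ∀ φ : SG n,
      len (φ * w0) + len φ = #(univ.filter fun p : Fin (n + 1) × Fin (n + 1) => p.1 < p.2) := by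
    intro φ
    have hrev : len (φ * w0) = #(univ.filter fun p : Fin (n + 1) × Fin (n + 1) =>
        p.1 < p.2 ∧ φ p.1 < φ p.2) := by
      refine card_bij' (fun p _ => (p.2.rev, p.1.rev)) (fun p _ => (p.2.rev, p.1.rev))
        ?_ ?_ ?_ ?_ <;> intro p hp <;> simp_all only [mem_filter] <;> simp_all [w0_apply]
    rw [hrev, len, ← card_filter_add_card_filter_not
      (s := univ.filter fun p : Fin (n + 1) × Fin (n + 1) => p.1 < p.2)
      (fun p => φ p.1 < φ p.2), filter_filter, filter_filter]
    congr 2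
    refine filter_congr fun p _ => and_congr_right fun hp => ?_
    rw [not_lt, (φ.injective.ne hp.ne').le_iff_lt]
  rw [key, ← key 1, one_mul, len_one, add_zero]

lemma leL_mul_w0 {σ γ : SG n} (h : leL σ γ) : leL (γ * w0) (σ * w0) := by
  obtain ⟨δ, rfl, hlen⟩ := h
  refine ⟨δ⁻¹, by rw [mul_assoc δ σ, inv_mul_cancel_left], ?_⟩
  have := len_mul_w0_add_len σ
  have := len_mul_w0_add_len (δ * σ)
  rw [len_inv]
  omega

lemma leL_mul_w0_iff {σ γ : SG n} : leL (γ * w0) (σ * w0) ↔ leL σ γ :=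
  ⟨fun h => by simpa only [mul_w0_mul_w0] using leL_mul_w0 h, leL_mul_w0⟩

lemma mem_desL_mul_w0 {γ : SG n} {i : Fin n} : i ∈ DesL (γ * w0) ↔ i ∉ DesL γ := by
  have := len_mul_w0_add_len γ
  have := len_mul_w0_add_len (sgen i * γ)
  have := len_sgen_mul i γ
  simp only [DesL, Set.mem_ofPred_eq, mul_assoc] at *
  omega

lemma mem_desL_sgen_mul {γ : SG n} {i : Fin n} : i ∈ DesL (sgen i * γ) ↔ i ∉ DesL γ := by
  have := len_sgen_mul i γ
  simp only [DesL, Set.mem_ofPred_eq, sgen_mul_sgen_mul]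
  omega

def itvMulW0Equiv (σ ρ : SG n) : Itv σ ρ ≃ Itv (ρ * w0) (σ * w0) where
  toFun γ := ⟨γ.1 * w0, leL_mul_w0 γ.2.2, leL_mul_w0 γ.2.1⟩
  invFun γ := ⟨γ.1 * w0, leL_mul_w0_iff.1 (by rw [mul_w0_mul_w0]; exact γ.2.2),
    leL_mul_w0_iff.1 (by rw [mul_w0_mul_w0]; exact γ.2.1)⟩
  left_inv γ := Subtype.ext (mul_w0_mul_w0 γ.1)
  right_inv γ := Subtype.ext (mul_w0_mul_w0 γ.1)

@[simp]
lemma coe_itvMulW0Equiv {σ ρ : SG n} (γ : Itv σ ρ) : (itvMulW0Equiv σ ρ γ).1 = γ.1 * w0 := rfl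

end WeakOrder

section Twist

variable {n : ℕ} (σ ρ : SG n)

lemma chiF_apply (δ : Module.Dual ℂ (Itv σ ρ →₀ ℂ)) :
    chiF σ ρ δ = ∑ γ, δ (Finsupp.single γ 1) • Finsupp.single (itvMulW0Equiv σ ρ γ) 1 :=
  sum_congr rfl fun γ _ => by rw [dif_pos ⟨leL_mul_w0 γ.2.2, leL_mul_w0 γ.2.1⟩]; rfl

lemma chiF_apply_itvMulW0Equiv (δ : Module.Dual ℂ (Itv σ ρ →₀ ℂ)) (β : Itv σ ρ) :
    chiF σ ρ δ (itvMulW0Equiv σ ρ β) = δ (Finsupp.single β 1) := by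
  simp [chiF_apply, Finsupp.finsetSum_apply, Finsupp.single_apply]

lemma chiF_bijective : Function.Bijective (chiF σ ρ) := by
  refine ⟨fun δ δ' h => Finsupp.basisSingleOne.ext fun β => ?_,
    fun w => ⟨Finsupp.linearCombination ℂ fun β => w (itvMulW0Equiv σ ρ β), ?_⟩⟩
  · simpa [chiF_apply_itvMulW0Equiv] using DFunLike.congr_fun h (itvMulW0Equiv σ ρ β)
  · ext γ'
    obtain ⟨β, rfl⟩ := (itvMulW0Equiv σ ρ).surjective γ'
    simp [chiF_apply_itvMulW0Equiv]

lemma bpiFun_apply_eq_single_add_bbarFun (i : Fin n) (β γ : Itv σ ρ) :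
    bpiFun σ ρ i β γ = (Finsupp.single (itvMulW0Equiv σ ρ γ) 1 +
      bbarFun (ρ * w0) (σ * w0) i (itvMulW0Equiv σ ρ γ) : Itv (ρ * w0) (σ * w0) →₀ ℂ)
        (itvMulW0Equiv σ ρ β) := by
  have hswap : sgen i * β.1 = γ.1 ↔ sgen i * γ.1 = β.1 := by
    constructor <;> intro h <;> rw [← h, sgen_mul_sgen_mul]
  have hdes : sgen i * β.1 = γ.1 → (i ∈ DesL γ.1 ↔ i ∉ DesL β.1) := by
    intro h
    rw [← h]
    exact mem_desL_sgen_mul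
  by_cases hβ : i ∈ DesL β.1 <;> by_cases hγ : i ∈ DesL γ.1 <;>
    simp only [bpiFun, bbarFun, hβ, hγ, coe_itvMulW0Equiv, mem_desL_mul_w0, ← mul_assoc,
      leL_mul_w0_iff, dite_single_apply, Finsupp.add_apply, Finsupp.neg_apply,
      Finsupp.single_apply, Subtype.ext_iff, mul_left_inj, if_true, if_false, not_true,
      not_false_eq_true]
  all_goals split_ifs <;> grind

lemma chiF_dualMap_bpi (i : Fin n) (δ : Module.Dual ℂ (Itv σ ρ →₀ ℂ)) :
    chiF σ ρ ((bpi σ ρ i).dualMap δ) = chiF σ ρ δ + bbar (ρ * w0) (σ * w0) i (chiF σ ρ δ) := by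
  let b := (Finsupp.basisSingleOne : Module.Basis (Itv σ ρ) ℂ (Itv σ ρ →₀ ℂ)).dualBasis
  suffices chiF σ ρ ∘ₗ (bpi σ ρ i).dualMap = chiF σ ρ + bbar (ρ * w0) (σ * w0) i ∘ₗ chiF σ ρ from
    LinearMap.congr_fun this δ
  refine b.ext fun γ => ?_
  have hγ : chiF σ ρ (b γ) = Finsupp.single (itvMulW0Equiv σ ρ γ) 1 := by
    ext γ'
    obtain ⟨β, rfl⟩ := (itvMulW0Equiv σ ρ).surjective γ'
    simp [b, chiF_apply_itvMulW0Equiv, Finsupp.single_apply, eq_comm]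
  ext γ'
  obtain ⟨β, rfl⟩ := (itvMulW0Equiv σ ρ).surjective γ'
  simp only [LinearMap.comp_apply, LinearMap.add_apply, hγ]
  simp [b, chiF_apply_itvMulW0Equiv, bpi, bbar, bpiFun_apply_eq_single_add_bbarFun]

end Twist

/-- The `χ`-twisted action of `π_i` on the dual space is precomposition with `bpi σ ρ i`, and
`π_i = 1 + π̄_i` acts on `B̄(ρw₀,σw₀)` by `w ↦ w + π̄_i ⋆ w`. -/
theorem stmt18 (n : ℕ) (σ ρ : SG n) :
    Function.Bijective (chiF σ ρ) ∧
    ∀ (i : Fin n) (δ : Module.Dual ℂ (Itv σ ρ →₀ ℂ)),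
      chiF σ ρ ((bpi σ ρ i).dualMap δ) =
        chiF σ ρ δ + bbar (ρ * w0) (σ * w0) i (chiF σ ρ δ) :=
  ⟨chiF_bijective σ ρ, chiF_dualMap_bpi σ ρ⟩

end
end
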